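/- arXiv:1709.07517 — 4 statements merged into one kernel-verified Lean document; each statement's English description precedes it below -/
import Mathlib

section
/- Let M be a real n×n skew-symmetric matrix and let f : ℝⁿ → ℂ be a smooth function. Then the operators f ↦ (Mx)·∇f and the Laplacian commute: for every x ∈ ℝⁿ, Δ((Mx)·∇f)(x) = (Mx)·∇(Δf)(x), where on the left-hand side (Mx)·∇f denotes the function y ↦ (My)·∇f(y). -/
open Matrix

/-- The Laplacian on `ℝⁿ`, as the sum of second partial derivatives. -/
noncomputable def laplacian {n : ℕ} {E : Type*} [NormedAddCommGroup E] [NormedSpace ℝ E]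
    (f : (Fin n → ℝ) → E) (x : Fin n → ℝ) : E :=
  ∑ i : Fin n, fderiv ℝ (fun y => fderiv ℝ f y (Pi.single i 1)) x (Pi.single i 1)

/-- For `M` real skew-symmetric and `f` smooth, the angular-derivative operator
`f ↦ (Mx)·∇f` commutes with the Laplacian. -/
theorem laplacian_comm_angular (n : ℕ) (M : Matrix (Fin n) (Fin n) ℝ)
    (hM : Mᵀ = -M) (f : (Fin n → ℝ) → ℂ) (hf : ContDiff ℝ (⊤ : ℕ∞) f) (x : Fin n → ℝ) :
    laplacian (fun y => fderiv ℝ f y (M.mulVec y)) x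
      = fderiv ℝ (fun y => laplacian f y) x (M.mulVec x) := by
  set L : (Fin n → ℝ) →L[ℝ] (Fin n → ℝ) := LinearMap.toContinuousLinearMap M.mulVecLin with hL
  have hLapp : ∀ y : Fin n → ℝ, L y = M.mulVec y := fun _ => rfl
  set f' := fderiv ℝ f with hf'
  set f'' := fderiv ℝ f' with hf''
  set f''' := fderiv ℝ f'' with hf'''
  have cf' : ContDiff ℝ (⊤ : ℕ∞) f' := hf.fderiv_right (by simp)
  have cf'' : ContDiff ℝ (⊤ : ℕ∞) f'' := cf'.fderiv_right (by simp)
  have cf''' := cf''.fderiv_right (m := (⊤ : ℕ∞)) (by simp)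
  have df : Differentiable ℝ f := hf.differentiable (by simp)
  have df' : Differentiable ℝ f' := cf'.differentiable (by simp)
  have df'' : Differentiable ℝ f'' := cf''.differentiable (by simp)
  have df''' := cf'''.differentiable (by simp)
  set e : Fin n → (Fin n → ℝ) := fun i => Pi.single i 1 with he
  -- derivative of evaluation at a constant vector
  have happ1 : ∀ (v : Fin n → ℝ) (y : Fin n → ℝ),
      fderiv ℝ (fun z => f' z v) y = (f'' y).flip v := by
    intro v y
    rw [fderiv_clm_apply (df' y) (differentiableAt_const v)]
    simp
    rfl
  have happ2 : ∀ (v : Fin n → ℝ) (y : Fin n → ℝ),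
      fderiv ℝ (fun z => f'' z v) y = (f''' y).flip v := by
    intro v y
    rw [fderiv_clm_apply (df'' y) (differentiableAt_const v)]
    simp
    rfl
  have happ2' : ∀ (a b v y : Fin n → ℝ),
      fderiv ℝ (fun z => f'' z a b) y v = f''' y v a b := by
    intro a b v y
    have : (fun z => f'' z a b) = (fun z => (fun w => f'' w a) z b) := rfl
    rw [this, fderiv_clm_apply ((df''.clm_apply (differentiable_const a)) y)
      (differentiableAt_const b)]
    simp [happ2]
  -- symmetry of second derivative
  have hsym2 : ∀ (y a b : Fin n → ℝ), f'' y a b = f'' y b a := fun y a b =>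
    second_derivative_symmetric (fun z => (df z).hasFDerivAt) ((df' y).hasFDerivAt) a b
  -- symmetry of third derivative in first two slots
  have hsym3a : ∀ (a b : Fin n → ℝ), f''' x a b = f''' x b a := fun a b =>
    second_derivative_symmetric (fun z => (df' z).hasFDerivAt) ((df'' x).hasFDerivAt) a b
  -- symmetry of third derivative in last two slots
  have hsym3b : ∀ (a b v : Fin n → ℝ), f''' x v a b = f''' x v b a := by
    intro a b v
    rw [← happ2' a b v x, ← happ2' b a v x,
      show (fun z => f'' z a b) = (fun z => f'' z b a) from funext fun z => hsym2 z a b]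
  -- the inner first-order function of LHS, rewritten
  have hg : ∀ y : Fin n → ℝ,
      fderiv ℝ (fun z => fderiv ℝ f z (M.mulVec z)) y
        = (f' y).comp L + (f'' y).flip (L y) := by
    intro y
    have : (fun z => fderiv ℝ f z (M.mulVec z)) = (fun z => f' z (L z)) := rfl
    rw [this, fderiv_clm_apply (df' y) (L.differentiableAt), L.fderiv]
  -- LHS summand computation
  have hLHS : ∀ i : Fin n,
      fderiv ℝ (fun y => fderiv ℝ (fun z => fderiv ℝ f z (M.mulVec z)) y (e i)) x (e i)
        = f''' x (e i) (e i) (L x) + 2 • f'' x (e i) (L (e i)) := by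
    intro i
    have h1 : (fun y => fderiv ℝ (fun z => fderiv ℝ f z (M.mulVec z)) y (e i))
        = fun y => f' y (L (e i)) + f'' y (e i) (L y) := by
      funext y; rw [hg y]; simp
    rw [h1]
    have d1 : DifferentiableAt ℝ (fun y => f' y (L (e i))) x :=
      (df'.clm_apply (differentiable_const _)) x
    have d2 : DifferentiableAt ℝ (fun y => f'' y (e i) (L y)) x :=
      ((df''.clm_apply (differentiable_const (e i))).clm_apply L.differentiable) x
    rw [fderiv_fun_add d1 d2]
    have e1 : fderiv ℝ (fun y => f' y (L (e i))) x (e i) = f'' x (e i) (L (e i)) := by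
      rw [happ1]; rfl
    have e2 : fderiv ℝ (fun y => f'' y (e i) (L y)) x (e i)
        = f'' x (e i) (L (e i)) + f''' x (e i) (e i) (L x) := by
      rw [fderiv_clm_apply ((df''.clm_apply (differentiable_const (e i))) x)
        L.differentiableAt, L.fderiv]
      simp [happ2]
    simp only [ContinuousLinearMap.add_apply, e1, e2]
    rw [two_smul]
    ring
  -- RHS: laplacian f as sums of second derivatives
  have hlap : (fun y => laplacian f y) = fun y => ∑ i : Fin n, f'' y (e i) (e i) := by
    funext y
    unfold laplacian
    refine Finset.sum_congr rfl fun i _ => ?_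
    rw [happ1]
    rfl
  have hRHS : fderiv ℝ (fun y => laplacian f y) x (M.mulVec x)
      = ∑ i : Fin n, f''' x (L x) (e i) (e i) := by
    rw [hlap, ← hLapp]
    have dsum : ∀ i ∈ Finset.univ, DifferentiableAt ℝ (fun y => f'' y (e i) (e i)) x :=
      fun i _ => ((df''.clm_apply (differentiable_const (e i))).clm_apply
        (differentiable_const (e i))) x
    rw [fderiv_fun_sum dsum]
    rw [ContinuousLinearMap.sum_apply]
    exact Finset.sum_congr rfl fun i _ => happ2' (e i) (e i) (L x) x
  -- skew-symmetry kills the cross term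
  have hskew : ∀ i j, M j i = - M i j := by
    intro i j
    have := congrFun (congrFun hM i) j
    simpa [Matrix.transpose_apply] using this
  have hLe : ∀ i : Fin n, L (e i) = ∑ j : Fin n, M j i • e j := by
    intro i
    funext k
    simp [hLapp, he, Matrix.mulVec_single, Finset.sum_apply, Pi.single_apply,
      mul_comm]
  have hS : ∑ i : Fin n, f'' x (e i) (L (e i)) = 0 := by
    have hexp : ∑ i : Fin n, f'' x (e i) (L (e i))
        = ∑ i : Fin n, ∑ j : Fin n, M j i • f'' x (e i) (e j) := by
      refine Finset.sum_congr rfl fun i _ => ?_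
      rw [hLe i, map_sum]
      exact Finset.sum_congr rfl fun j _ => by simp
    have hneg : ∑ i : Fin n, ∑ j : Fin n, M j i • f'' x (e i) (e j)
        = - ∑ i : Fin n, ∑ j : Fin n, M j i • f'' x (e i) (e j) := by
      calc ∑ i : Fin n, ∑ j : Fin n, M j i • f'' x (e i) (e j)
          = ∑ i : Fin n, ∑ j : Fin n, -(M i j • f'' x (e j) (e i)) := by
            refine Finset.sum_congr rfl fun i _ => Finset.sum_congr rfl fun j _ => ?_
            rw [hskew i j, hsym2 x (e i) (e j), neg_smul]
        _ = - ∑ i : Fin n, ∑ j : Fin n, M i j • f'' x (e j) (e i) := by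
            simp [Finset.sum_neg_distrib]
        _ = - ∑ j : Fin n, ∑ i : Fin n, M j i • f'' x (e i) (e j) := by
            rw [Finset.sum_comm]
        _ = - ∑ i : Fin n, ∑ j : Fin n, M j i • f'' x (e i) (e j) := by
            rw [Finset.sum_comm]
    rw [hexp]
    linear_combination ((1:ℂ)/2) * hneg
  calc laplacian (fun y => fderiv ℝ f y (M.mulVec y)) x
      = ∑ i : Fin n, (f''' x (e i) (e i) (L x) + 2 • f'' x (e i) (L (e i))) := by
        unfold laplacian
        exact Finset.sum_congr rfl fun i _ => hLHS i
    _ = ∑ i : Fin n, f''' x (e i) (e i) (L x)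
          + 2 • ∑ i : Fin n, f'' x (e i) (L (e i)) := by
        rw [Finset.sum_add_distrib, Finset.smul_sum]
    _ = ∑ i : Fin n, f''' x (L x) (e i) (e i) := by
        rw [hS, smul_zero, add_zero]
        refine Finset.sum_congr rfl fun i _ => ?_
        rw [hsym3b (e i) (L x) (e i), hsym3a (e i) (L x)]
    _ = fderiv ℝ (fun y => laplacian f y) x (M.mulVec x) := hRHS.symm
end

section
/- Fix n ≥ 1, γ > 0, and a real n×n skew-symmetric matrix M. Let Q : ℝⁿ → ℝ be a smooth function such that Q, ∇Q and x ↦ |x|Q(x) all belong to L²(ℝⁿ), with ‖∇Q‖_{L²} > 0. Define u : [0, π/(4γ)) × ℝⁿ → ℂ by u(t,x) = cos(2γt)^{−n/2} · e^{−i(γ/2)|x|² tan(2γt)} · e^{i tan(2γt)/(2γ)} · Q( exp(tM)x / cos(2γt) ). Then the spatial gradient norm blows up at rate (π/(4γ) − t)^{−1}; precisely, lim_{t → π/(4γ)⁻} cos(2γt) · ‖∇ₓu(t,·)‖_{L²(ℝⁿ)} = ‖∇Q‖_{L²(ℝⁿ)}. -/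
open Matrix Set MeasureTheory Filter

open Matrix Set MeasureTheory Filter

private lemma aux_sum_sq_deriv (n : ℕ) (x : Fin n → ℝ) :
    HasFDerivAt (fun x : Fin n → ℝ => ∑ i, x i ^ 2)
      (∑ i, (2 * x i) • (ContinuousLinearMap.proj i : (Fin n → ℝ) →L[ℝ] ℝ)) x := by
  apply HasFDerivAt.fun_sum
  intro i _
  have h0 := (ContinuousLinearMap.proj i : (Fin n → ℝ) →L[ℝ] ℝ).hasFDerivAt (x := x)
  have h := h0.mul h0
  simp only [ContinuousLinearMap.proj_apply] at h
  have heq : (fun y : Fin n → ℝ => y i * y i) = fun y => y i ^ 2 := by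
    funext y; ring
  have h : HasFDerivAt (fun y : Fin n → ℝ => y i * y i) _ x := h
  rw [heq] at h
  refine h.congr_fderiv ?_
  rw [two_mul, add_smul]

private lemma aux_fderiv (n : ℕ) (Q : (Fin n → ℝ) → ℝ) (hQ : ContDiff ℝ (⊤ : ℕ∞) Q)
    (K d : ℂ) (B : Matrix (Fin n) (Fin n) ℝ) (x v : Fin n → ℝ) :
    fderiv ℝ (fun x : Fin n → ℝ =>
        K * (Complex.exp (d * ((∑ i, x i ^ 2 : ℝ) : ℂ)) * ((Q (B.mulVec x) : ℝ) : ℂ))) x v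
      = K * Complex.exp (d * ((∑ i, x i ^ 2 : ℝ) : ℂ)) *
          (d * (∑ i, 2 * (x i : ℂ) * (v i : ℂ)) * (Q (B.mulVec x) : ℂ)
            + ((fderiv ℝ Q (B.mulVec x) (B.mulVec v) : ℝ) : ℂ)) := by
  have hS := aux_sum_sq_deriv n x
  have hg : HasFDerivAt (fun x : Fin n → ℝ => d * ((∑ i, x i ^ 2 : ℝ) : ℂ))
      (d • (Complex.ofRealCLM.comp (∑ i, (2 * x i) • (ContinuousLinearMap.proj i : (Fin n → ℝ) →L[ℝ] ℝ)))) x :=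
    (Complex.ofRealCLM.hasFDerivAt.comp x hS).const_mul d
  have hexp := hg.cexp
  have hBlin : HasFDerivAt (fun x : Fin n → ℝ => B.mulVec x) (B.mulVecLin.toContinuousLinearMap) x :=
    B.mulVecLin.toContinuousLinearMap.hasFDerivAt
  have hQd : HasFDerivAt Q (fderiv ℝ Q (B.mulVec x)) (B.mulVec x) :=
    (hQ.differentiable (by simp) (B.mulVec x)).hasFDerivAt
  have hQB : HasFDerivAt (fun x : Fin n → ℝ => ((Q (B.mulVec x) : ℝ) : ℂ))
      (Complex.ofRealCLM.comp ((fderiv ℝ Q (B.mulVec x)).comp B.mulVecLin.toContinuousLinearMap)) x :=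
    Complex.ofRealCLM.hasFDerivAt.comp x ((hQd.comp x hBlin))
  have hprod := (hexp.mul hQB).const_mul K
  rw [HasFDerivAt.fderiv (f := fun x : Fin n → ℝ =>
      K * (Complex.exp (d * ((∑ i, x i ^ 2 : ℝ) : ℂ)) * ((Q (B.mulVec x) : ℝ) : ℂ))) hprod]
  simp only [ContinuousLinearMap.coe_smul', ContinuousLinearMap.coe_comp',
    ContinuousLinearMap.add_apply, ContinuousLinearMap.smul_apply,
    ContinuousLinearMap.comp_apply, Pi.smul_apply, Function.comp_apply,
    ContinuousLinearMap.coe_sum', Finset.sum_apply, ContinuousLinearMap.proj_apply,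
    Complex.ofRealCLM_apply, LinearMap.coe_toContinuousLinearMap', Matrix.mulVecLin_apply,
    smul_eq_mul]
  push_cast
  ring

private lemma aux_fderiv_single (n : ℕ) (Q : (Fin n → ℝ) → ℝ) (hQ : ContDiff ℝ (⊤ : ℕ∞) Q)
    (K d : ℂ) (B : Matrix (Fin n) (Fin n) ℝ) (x : Fin n → ℝ) (i : Fin n) :
    fderiv ℝ (fun x : Fin n → ℝ =>
        K * (Complex.exp (d * ((∑ i, x i ^ 2 : ℝ) : ℂ)) * ((Q (B.mulVec x) : ℝ) : ℂ))) x (Pi.single i 1)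
      = K * Complex.exp (d * ((∑ i, x i ^ 2 : ℝ) : ℂ)) *
          (d * (2 * (x i : ℂ)) * (Q (B.mulVec x) : ℂ)
            + ((fderiv ℝ Q (B.mulVec x) (B.mulVec (Pi.single i 1)) : ℝ) : ℂ)) := by
  rw [aux_fderiv n Q hQ K d B x (Pi.single i 1)]
  congr 2
  rw [Finset.sum_eq_single i]
  · simp
  · intro j _ hj
    simp [Pi.single_apply, hj]
  · simp

private lemma aux_norm (r S a q g : ℝ) (K : ℂ) :
    ‖K * Complex.exp ((-Complex.I * (r : ℂ)) * ((S : ℝ) : ℂ)) *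
        ((-Complex.I * (r : ℂ)) * (2 * (a : ℂ)) * (q : ℂ) + (g : ℂ))‖ ^ 2
      = ‖K‖ ^ 2 * ((2 * r * a * q) ^ 2 + g ^ 2) := by
  rw [norm_mul, norm_mul, mul_pow, mul_pow]
  have h1 : ‖Complex.exp (-Complex.I * (r : ℂ) * ((S : ℝ) : ℂ))‖ = 1 := by
    rw [Complex.norm_exp]
    simp
  rw [h1]
  have h2 : ‖(-Complex.I * (r : ℂ)) * (2 * (a : ℂ)) * (q : ℂ) + (g : ℂ)‖ ^ 2
      = (2 * r * a * q) ^ 2 + g ^ 2 := by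
    rw [Complex.sq_norm, Complex.normSq_apply]
    simp
    ring
  rw [h2]; ring

private lemma aux_orth_sum (n : ℕ) (P : Matrix (Fin n) (Fin n) ℝ) (h : Pᵀ * P = 1)
    (x : Fin n → ℝ) : ∑ i, (P.mulVec x i) ^ 2 = ∑ i, (x i) ^ 2 := by
  have e1 : ∑ i, (P.mulVec x i) ^ 2 = P.mulVec x ⬝ᵥ P.mulVec x := by
    simp [dotProduct, sq]
  rw [e1, Matrix.dotProduct_mulVec, ← Matrix.mulVec_transpose, Matrix.mulVec_mulVec, h]
  simp [dotProduct, sq]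

private lemma aux_cov (n : ℕ) (B : Matrix (Fin n) (Fin n) ℝ) (hd : B.det ≠ 0)
    (F : (Fin n → ℝ) → ℝ) (hF : Continuous F) :
    ∫ x : Fin n → ℝ, F (B.mulVec x) = |B.det|⁻¹ * ∫ y : Fin n → ℝ, F y := by
  have hmap := Real.map_matrix_volume_pi_eq_smul_volume_pi hd
  have hcont : Continuous (Matrix.toLin' B) := LinearMap.continuous_of_finiteDimensional _
  have e1 : ∫ x : Fin n → ℝ, F (B.mulVec x) = ∫ x : Fin n → ℝ, F (Matrix.toLin' B x) := by
    simp [Matrix.toLin'_apply]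
  rw [e1, ← MeasureTheory.integral_map hcont.aemeasurable
    (hF.aestronglyMeasurable (μ := Measure.map (Matrix.toLin' B) volume)), hmap,
    MeasureTheory.integral_smul_measure]
  rw [ENNReal.toReal_ofReal (abs_nonneg _)]
  rw [abs_inv]
  simp [smul_eq_mul]


/-- The solitary-wave blowup solution
`u(t,x) = cos(2γt)^{−n/2} e^{−i(γ/2)|x|² tan 2γt} e^{i tan(2γt)/(2γ)} Q(e^{tM}x/cos 2γt)`
blows up at `T = π/(4γ)` with rate `(π/(4γ) − t)^{−1}`; precisely,
`cos(2γt)·‖∇u(t)‖_{L²} → ‖∇Q‖_{L²}` as `t → π/(4γ)⁻`. -/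
theorem solitary_wave_blowup_rate
    (n : ℕ) (hn : 1 ≤ n) (γ : ℝ) (hγ : 0 < γ)
    (M : Matrix (Fin n) (Fin n) ℝ) (hM : Mᵀ = -M)
    (Q : (Fin n → ℝ) → ℝ) (hQ_smooth : ContDiff ℝ (⊤ : ℕ∞) Q)
    (hQ_L2 : MemLp Q 2 (volume : Measure (Fin n → ℝ)))
    (hQ_grad_L2 : MemLp (fun x => fderiv ℝ Q x) 2 (volume : Measure (Fin n → ℝ)))
    (hQ_weight_L2 : MemLp (fun x => Real.sqrt (∑ i, (x i)^2) * Q x) 2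
      (volume : Measure (Fin n → ℝ)))
    (hQ_grad_pos : 0 < Real.sqrt (∫ x : Fin n → ℝ, ∑ i, (fderiv ℝ Q x (Pi.single i 1))^2))
    (u : ℝ → (Fin n → ℝ) → ℂ)
    (hu : ∀ t x, u t x
      = ((Real.cos (2*γ*t) ^ (-(n : ℝ)/2) : ℝ) : ℂ)
        * Complex.exp (-Complex.I * (((γ/2) * (∑ i, (x i)^2)
            * Real.tan (2*γ*t) : ℝ) : ℂ))
        * Complex.exp (Complex.I * ((Real.tan (2*γ*t)/(2*γ) : ℝ) : ℂ))
        * ((Q ((Real.cos (2*γ*t))⁻¹ • (NormedSpace.exp (t • M)).mulVec x) : ℝ) : ℂ)) :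
    Tendsto
      (fun t => Real.cos (2*γ*t)
        * Real.sqrt (∫ x : Fin n → ℝ, ∑ i, ‖fderiv ℝ (u t) x (Pi.single i 1)‖^2))
      (nhdsWithin (Real.pi/(4*γ)) (Iio (Real.pi/(4*γ))))
      (nhds (Real.sqrt (∫ x : Fin n → ℝ, ∑ i, (fderiv ℝ Q x (Pi.single i 1))^2))) := by
  have hπ : 0 < Real.pi := Real.pi_pos
  set T : ℝ := Real.pi / (4*γ) with hTdef
  have hT0 : 0 < T := by positivity
  set G : ℝ := ∫ x : Fin n → ℝ, ∑ i, (fderiv ℝ Q x (Pi.single i 1))^2 with hGdef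
  set W : ℝ := ∫ y : Fin n → ℝ, (∑ i, (y i)^2) * (Q y)^2 with hWdef
  -- continuity facts
  have hQcont : Continuous Q := hQ_smooth.continuous
  have hgradcont : Continuous (fun y => fderiv ℝ Q y) :=
    hQ_smooth.continuous_fderiv (by simp)
  have hgi : ∀ j : Fin n, Continuous (fun y => fderiv ℝ Q y (Pi.single j 1)) :=
    fun j => hgradcont.clm_apply continuous_const
  -- integrability
  have h1 : Integrable (fun y : Fin n → ℝ => (∑ i, (y i)^2) * (Q y)^2) := by
    have h := hQ_weight_L2.integrable_sq
    refine h.congr (Eventually.of_forall fun y => ?_)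
    show (Real.sqrt (∑ i, (y i)^2) * Q y)^2 = (∑ i, (y i)^2) * (Q y)^2
    rw [mul_pow, Real.sq_sqrt (by positivity)]
  have hnormsq : Integrable (fun y : Fin n → ℝ => ‖fderiv ℝ Q y‖^2) := by
    have h := hQ_grad_L2.integrable_norm_rpow two_ne_zero ENNReal.ofNat_ne_top
    refine h.congr (Eventually.of_forall fun y => ?_)
    show ‖fderiv ℝ Q y‖ ^ (ENNReal.toReal 2) = ‖fderiv ℝ Q y‖ ^ 2
    rw [ENNReal.toReal_ofNat, Real.rpow_two]
  have h2 : Integrable (fun y : Fin n → ℝ => ∑ j, (fderiv ℝ Q y (Pi.single j 1))^2) := by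
    apply integrable_finset_sum
    intro j _
    refine hnormsq.mono' (((hgi j).pow 2).aestronglyMeasurable)
      (Eventually.of_forall fun y => ?_)
    have hb : |fderiv ℝ Q y (Pi.single j 1)| ≤ ‖fderiv ℝ Q y‖ := by
      calc |fderiv ℝ Q y (Pi.single j 1)| = ‖fderiv ℝ Q y (Pi.single j 1)‖ := rfl
        _ ≤ ‖fderiv ℝ Q y‖ * ‖(Pi.single j 1 : Fin n → ℝ)‖ := (fderiv ℝ Q y).le_opNorm _
        _ = ‖fderiv ℝ Q y‖ := by rw [Pi.norm_single]; simp
    calc ‖(fderiv ℝ Q y (Pi.single j 1))^2‖ = |fderiv ℝ Q y (Pi.single j 1)|^2 := by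
          rw [Real.norm_eq_abs, abs_pow]
      _ ≤ ‖fderiv ℝ Q y‖^2 := by
          exact pow_le_pow_left₀ (abs_nonneg _) hb 2
  -- the key identity for all t with cos (2γt) > 0
  have key : ∀ t : ℝ, 0 < Real.cos (2*γ*t) →
      Real.cos (2*γ*t)
        * Real.sqrt (∫ x : Fin n → ℝ, ∑ i, ‖fderiv ℝ (u t) x (Pi.single i 1)‖^2)
      = Real.sqrt (γ^2 * Real.sin (2*γ*t)^2 * Real.cos (2*γ*t)^2 * W + G) := by
    intro t hc
    set c : ℝ := Real.cos (2*γ*t) with hcdef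
    set s : ℝ := Real.tan (2*γ*t) with hsdef
    set A : Matrix (Fin n) (Fin n) ℝ := NormedSpace.exp (t • M) with hAdef
    set B : Matrix (Fin n) (Fin n) ℝ := c⁻¹ • A with hBdef
    set r : ℝ := γ/2 * s with hrdef
    set K : ℂ := ((c ^ (-(n:ℝ)/2) : ℝ) : ℂ) * Complex.exp (Complex.I * ((s/(2*γ) : ℝ) : ℂ))
      with hKdef
    set d : ℂ := -Complex.I * ((r : ℝ) : ℂ) with hddef
    have hc0 : c ≠ 0 := ne_of_gt hc
    -- orthogonality of A
    have hAAT : A * Aᵀ = 1 := by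
      rw [hAdef, ← Matrix.exp_transpose, Matrix.transpose_smul, hM, smul_neg, ← neg_smul]
      have := (Matrix.exp_add_of_commute (t • M) (-t • M)
        (by simpa using Commute.neg_right (Commute.refl (t • M)))).symm
      rw [this]
      simp [NormedSpace.exp_zero]
    have hATA : Aᵀ * A = 1 := mul_eq_one_comm.mp hAAT
    -- relations between A and B
    have hABx : ∀ x : Fin n → ℝ, A.mulVec x = c • B.mulVec x := by
      intro x
      rw [hBdef, Matrix.smul_mulVec, smul_smul, mul_inv_cancel₀ hc0, one_smul]
    have hBx : ∀ x : Fin n → ℝ, B.mulVec x = c⁻¹ • A.mulVec x := fun x =>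
      Matrix.smul_mulVec _ _ _
    -- canonical form of u t
    have hu_form : u t = fun x : Fin n → ℝ =>
        K * (Complex.exp (d * ((∑ i, x i ^ 2 : ℝ) : ℂ)) * ((Q (B.mulVec x) : ℝ) : ℂ)) := by
      funext x
      rw [hu, hBx]
      have he : -Complex.I * (((γ/2) * (∑ i, (x i)^2) * s : ℝ) : ℂ)
          = d * ((∑ i, x i ^ 2 : ℝ) : ℂ) := by
        rw [hddef, hrdef]; push_cast; ring
      rw [he, hKdef]
      ring
    -- norm of K
    have hKnorm : ‖K‖^2 = c ^ (-(n:ℝ)) := by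
      rw [hKdef, norm_mul, Complex.norm_real]
      have : ‖Complex.exp (Complex.I * ((s/(2*γ) : ℝ) : ℂ))‖ = 1 := by
        rw [mul_comm, Complex.norm_exp_ofReal_mul_I]
      rw [this, mul_one, Real.norm_eq_abs, abs_of_pos (Real.rpow_pos_of_pos hc _),
        ← Real.rpow_natCast (c ^ (-(n:ℝ)/2)) 2, ← Real.rpow_mul hc.le]
      norm_num
    -- sum identities
    have hsum1 : ∀ x : Fin n → ℝ, ∑ i, (x i)^2 = c^2 * ∑ i, (B.mulVec x i)^2 := by
      intro x
      have h := aux_orth_sum n A hATA x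
      rw [← h]
      have : ∀ i, A.mulVec x i = c * B.mulVec x i := by
        intro i; rw [hABx x]; simp [smul_eq_mul]
      rw [Finset.mul_sum]
      exact Finset.sum_congr rfl fun i _ => by rw [this i]; ring
    have hlin : ∀ (y w : Fin n → ℝ),
        fderiv ℝ Q y w = ∑ j, w j * fderiv ℝ Q y (Pi.single j 1) := by
      intro y w
      conv_lhs => rw [← Finset.univ_sum_single w, map_sum]
      refine Finset.sum_congr rfl fun j _ => ?_
      have hsm : (Pi.single j (w j) : Fin n → ℝ) = (w j) • (Pi.single j 1 : Fin n → ℝ) := by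
        ext k
        by_cases h : k = j <;> simp [Pi.single_apply, h]
      rw [hsm, ContinuousLinearMap.map_smul, smul_eq_mul]
    have hsumD : ∀ y : Fin n → ℝ,
        ∑ i, (fderiv ℝ Q y (B.mulVec (Pi.single i 1)))^2
          = (c^2)⁻¹ * ∑ j, (fderiv ℝ Q y (Pi.single j 1))^2 := by
      intro y
      set g : Fin n → ℝ := fun j => fderiv ℝ Q y (Pi.single j 1) with hgdef
      have e1 : ∀ i, fderiv ℝ Q y (B.mulVec (Pi.single i 1)) = Bᵀ.mulVec g i := by
        intro i
        rw [hlin]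
        simp only [Matrix.mulVec, dotProduct, Matrix.transpose_apply]
        refine Finset.sum_congr rfl fun j _ => ?_
        congr 1
        simp [Matrix.mulVec, dotProduct, Pi.single_apply]
      have e2 : ∑ i, (Bᵀ.mulVec g i)^2 = (c^2)⁻¹ * ∑ j, (g j)^2 := by
        have hP : (Aᵀ)ᵀ * Aᵀ = 1 := by rw [Matrix.transpose_transpose]; exact hAAT
        have h := aux_orth_sum n Aᵀ hP g
        have hATg : ∀ i, Aᵀ.mulVec g i = c * Bᵀ.mulVec g i := by
          intro i
          have : Bᵀ = c⁻¹ • Aᵀ := by rw [hBdef, Matrix.transpose_smul]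
          rw [this, Matrix.smul_mulVec]
          simp [smul_eq_mul, mul_comm, mul_left_comm, mul_inv_cancel₀ hc0]
          rw [← mul_assoc, mul_inv_cancel₀ hc0, one_mul]
        have : ∑ i, (g i)^2 = c^2 * ∑ i, (Bᵀ.mulVec g i)^2 := by
          rw [← h, Finset.mul_sum]
          exact Finset.sum_congr rfl fun i _ => by rw [hATg i]; ring
        rw [this]
        field_simp
      rw [← e2]
      exact Finset.sum_congr rfl fun i _ => by rw [e1 i]
    -- pointwise formula for the integrand
    have hnorm : ∀ x : Fin n → ℝ,
        ∑ i, ‖fderiv ℝ (u t) x (Pi.single i 1)‖^2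
          = c ^ (-(n:ℝ)) * (γ^2 * s^2 * c^2 * ((∑ i, (B.mulVec x i)^2) * (Q (B.mulVec x))^2)
              + (c^2)⁻¹ * ∑ j, (fderiv ℝ Q (B.mulVec x) (Pi.single j 1))^2) := by
      intro x
      have hterm : ∀ i, ‖fderiv ℝ (u t) x (Pi.single i 1)‖^2
          = ‖K‖^2 * ((2 * r * (x i) * Q (B.mulVec x))^2
              + (fderiv ℝ Q (B.mulVec x) (B.mulVec (Pi.single i 1)))^2) := by
        intro i
        rw [hu_form, aux_fderiv_single n Q hQ_smooth K d B x i, hddef]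
        exact aux_norm r (∑ i, x i ^ 2) (x i) (Q (B.mulVec x))
          (fderiv ℝ Q (B.mulVec x) (B.mulVec (Pi.single i 1))) K
      calc ∑ i, ‖fderiv ℝ (u t) x (Pi.single i 1)‖^2
          = ∑ i, ‖K‖^2 * ((2 * r * (x i) * Q (B.mulVec x))^2
              + (fderiv ℝ Q (B.mulVec x) (B.mulVec (Pi.single i 1)))^2) :=
            Finset.sum_congr rfl fun i _ => hterm i
        _ = ‖K‖^2 * ((2*r)^2 * (Q (B.mulVec x))^2 * (∑ i, (x i)^2)
              + ∑ i, (fderiv ℝ Q (B.mulVec x) (B.mulVec (Pi.single i 1)))^2) := by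
            rw [← Finset.mul_sum]
            congr 1
            rw [Finset.sum_add_distrib]
            congr 1
            rw [Finset.mul_sum]
            exact Finset.sum_congr rfl fun i _ => by ring
        _ = c ^ (-(n:ℝ)) * (γ^2 * s^2 * c^2 * ((∑ i, (B.mulVec x i)^2) * (Q (B.mulVec x))^2)
              + (c^2)⁻¹ * ∑ j, (fderiv ℝ Q (B.mulVec x) (Pi.single j 1))^2) := by
            rw [hKnorm, hsum1 x, hsumD (B.mulVec x)]
            rw [hrdef]
            ring
    -- determinant of B
    have hdetA : |A.det| = 1 := by
      have h := congrArg Matrix.det hAAT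
      rw [Matrix.det_mul, Matrix.det_transpose, Matrix.det_one] at h
      rcases mul_self_eq_one_iff.mp h with h' | h' <;> rw [h'] <;> norm_num
    have hdetB : B.det = (c⁻¹)^n * A.det := by
      rw [hBdef, Matrix.det_smul]
      simp
    have hdetB0 : B.det ≠ 0 := by
      rw [hdetB]
      apply mul_ne_zero
      · exact pow_ne_zero _ (inv_ne_zero hc0)
      · intro h0; rw [h0] at hdetA; simp at hdetA
    have habsdet : |B.det|⁻¹ = c^n := by
      rw [hdetB, abs_mul, hdetA, mul_one, abs_pow, abs_inv, abs_of_pos hc, ← inv_pow, inv_inv]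
    -- the function under the change of variables
    set F : (Fin n → ℝ) → ℝ := fun y =>
      γ^2 * s^2 * c^2 * ((∑ i, (y i)^2) * (Q y)^2)
        + (c^2)⁻¹ * ∑ j, (fderiv ℝ Q y (Pi.single j 1))^2 with hFdef
    have hFapp : ∀ y, F y = γ^2 * s^2 * c^2 * ((∑ i, (y i)^2) * (Q y)^2)
        + (c^2)⁻¹ * ∑ j, (fderiv ℝ Q y (Pi.single j 1))^2 := fun y => rfl
    have hFcont : Continuous F := by
      apply Continuous.add
      · apply continuous_const.mul
        apply Continuous.mul
        · exact continuous_finset_sum _ fun i _ => ((continuous_apply i).pow 2)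
        · exact hQcont.pow 2
      · exact continuous_const.mul
          (continuous_finset_sum _ fun j _ => ((hgi j).pow 2))
    -- compute the integral
    have hI : (∫ x : Fin n → ℝ, ∑ i, ‖fderiv ℝ (u t) x (Pi.single i 1)‖^2)
        = c ^ (-(n:ℝ)) * (c^n * (γ^2 * s^2 * c^2 * W + (c^2)⁻¹ * G)) := by
      have e0 : (∫ x : Fin n → ℝ, ∑ i, ‖fderiv ℝ (u t) x (Pi.single i 1)‖^2)
          = ∫ x : Fin n → ℝ, c ^ (-(n:ℝ)) * F (B.mulVec x) := by
        refine integral_congr_ae (Eventually.of_forall fun x => ?_)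
        show ∑ i, ‖fderiv ℝ (u t) x (Pi.single i 1)‖^2 = c ^ (-(n:ℝ)) * F (B.mulVec x)
        rw [hnorm x, hFapp]
      rw [e0, MeasureTheory.integral_const_mul]
      congr 1
      rw [aux_cov n B hdetB0 F hFcont, habsdet]
      congr 1
      have e1 : ∫ y : Fin n → ℝ, F y
          = ∫ y : Fin n → ℝ, (γ^2 * s^2 * c^2 * ((∑ i, (y i)^2) * (Q y)^2)
              + (c^2)⁻¹ * ∑ j, (fderiv ℝ Q y (Pi.single j 1))^2) := by
        refine integral_congr_ae (Eventually.of_forall fun y => ?_)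
        exact hFapp y
      rw [e1, integral_add (h1.const_mul _) (h2.const_mul _),
        MeasureTheory.integral_const_mul, MeasureTheory.integral_const_mul]
    -- finish
    rw [hI]
    have hcsq : c * Real.sqrt (c ^ (-(n:ℝ)) * (c^n * (γ^2 * s^2 * c^2 * W + (c^2)⁻¹ * G)))
        = Real.sqrt (c^2 * (c ^ (-(n:ℝ)) * (c^n * (γ^2 * s^2 * c^2 * W + (c^2)⁻¹ * G)))) := by
      rw [Real.sqrt_mul (sq_nonneg c), Real.sqrt_sq hc.le]
    rw [hcsq]
    congr 1
    have hpow : c ^ (-(n:ℝ)) * (c:ℝ)^n = 1 := by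
      rw [← Real.rpow_natCast c n, ← Real.rpow_add hc]
      simp
    have hs2 : s^2 * c^2 = Real.sin (2*γ*t)^2 := by
      rw [hsdef, Real.tan_eq_sin_div_cos]
      field_simp
      rw [← hcdef, mul_div_assoc, div_self (pow_ne_zero 2 hc0), mul_one]
    calc c^2 * (c ^ (-(n:ℝ)) * (c^n * (γ^2 * s^2 * c^2 * W + (c^2)⁻¹ * G)))
        = (c ^ (-(n:ℝ)) * c^n) * (γ^2 * (s^2 * c^2) * c^2 * W + c^2 * (c^2)⁻¹ * G) := by ring
      _ = γ^2 * Real.sin (2*γ*t)^2 * c^2 * W + G := by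
          rw [hpow, hs2, mul_inv_cancel₀ (pow_ne_zero 2 hc0)]
          ring
  -- now the limit
  have hθT : 2*γ*T = Real.pi/2 := by
    rw [hTdef]; field_simp; ring
  have hcont : Continuous (fun t : ℝ =>
      Real.sqrt (γ^2 * Real.sin (2*γ*t)^2 * Real.cos (2*γ*t)^2 * W + G)) := by
    apply Real.continuous_sqrt.comp
    fun_prop
  have hval : Real.sqrt (γ^2 * Real.sin (2*γ*T)^2 * Real.cos (2*γ*T)^2 * W + G)
      = Real.sqrt G := by
    rw [hθT, Real.cos_pi_div_two]
    norm_num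
  have htend : Tendsto (fun t : ℝ =>
      Real.sqrt (γ^2 * Real.sin (2*γ*t)^2 * Real.cos (2*γ*t)^2 * W + G))
      (nhdsWithin T (Iio T)) (nhds (Real.sqrt G)) := by
    rw [← hval]
    exact (hcont.continuousAt.tendsto).mono_left nhdsWithin_le_nhds
  refine htend.congr' ?_
  filter_upwards [Ioo_mem_nhdsLT_of_mem (Set.mem_Ioc.mpr ⟨hT0, le_refl T⟩)] with t ht
  have hcpos : 0 < Real.cos (2*γ*t) := by
    apply Real.cos_pos_of_mem_Ioo
    constructor
    · have h0 : (0:ℝ) < t := ht.1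
      nlinarith
    · have h2 : 2*γ*t < 2*γ*T := by
        have := ht.2
        nlinarith
      rw [hθT] at h2
      exact h2
  exact (key t hcpos).symm
end

section
/- Fix n ≥ 1, γ > 0, a real n×n skew-symmetric matrix M, x₁ ∈ ℝⁿ, and T ∈ (0, π/(4γ)). Let Q : ℝⁿ → ℝ be a smooth function satisfying pointwise ΔQ − Q + |Q|^{4/n}Q = 0. Define u : [0,T) × ℝⁿ → ℂ by u(t,x) = ( 2γ cos(2γT) / sin(2γ(T−t)) )^{n/2} · e^{ −i(γ/2)|x|² cot(2γ(T−t)) } · e^{ i·2γ cos(2γT)cos(2γt)/sin(2γ(T−t)) } · Q( 2γ cos(2γT) exp(tM)x / sin(2γ(T−t)) − x₁ ). Then u satisfies pointwise on [0,T) × ℝⁿ the rotational NLS i∂ₜu = −Δu + γ²|x|²u − |u|^{4/n}u + i(Mx)·∇u. -/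
open Matrix Set

variable {n : ℕ}

open NormedSpace
lemma clm_apply_eq_sum {F : Type*} [NormedAddCommGroup F] [NormedSpace ℝ F]
    (L : (Fin n → ℝ) →L[ℝ] F) (x : Fin n → ℝ) :
    L x = ∑ i, x i • L (Pi.single i 1) := by
  have hx : x = ∑ i, x i • (Pi.single i 1 : Fin n → ℝ) := by
    funext j; simp [Finset.sum_apply, Pi.single_apply]
  conv_lhs => rw [hx, map_sum]
  simp

lemma sum_sq_hasFDerivAt (x : Fin n → ℝ) :
    HasFDerivAt (fun z : Fin n → ℝ => ∑ i, (z i)^2)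
      (∑ i, (2 * x i) • (ContinuousLinearMap.proj i : (Fin n → ℝ) →L[ℝ] ℝ)) x := by
  apply HasFDerivAt.fun_sum
  intro i _
  have h := ((ContinuousLinearMap.proj i : (Fin n → ℝ) →L[ℝ] ℝ)).hasFDerivAt (x := x)
  simpa [pow_two, two_mul, add_smul, Pi.mul_def] using h.mul h

lemma sum_sq_deriv_apply (x v : Fin n → ℝ) :
    (∑ i, (2 * x i) • (ContinuousLinearMap.proj i : (Fin n → ℝ) →L[ℝ] ℝ)) v
      = 2 * ∑ i, x i * v i := by
  simp [ContinuousLinearMap.sum_apply, Finset.mul_sum]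
  exact Finset.sum_congr rfl fun i _ => by ring

lemma bilin_orth (B : (Fin n → ℝ) →L[ℝ] (Fin n → ℝ) →L[ℝ] ℝ)
    (R : Matrix (Fin n) (Fin n) ℝ) (hR : R * Rᵀ = 1) :
    ∑ i, B (R.mulVec (Pi.single i 1)) (R.mulVec (Pi.single i 1))
      = ∑ i, B (Pi.single i 1) (Pi.single i 1) := by
  have hcol : ∀ i : Fin n, R.mulVec (Pi.single i 1) = ∑ j, R j i • (Pi.single j 1 : Fin n → ℝ) := by
    intro i
    funext k
    simp [Matrix.mulVec_single, Finset.sum_apply, Pi.single_apply]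
  calc ∑ i, B (R.mulVec (Pi.single i 1)) (R.mulVec (Pi.single i 1))
      = ∑ i, ∑ j, ∑ k, (R j i * R k i) * B (Pi.single j 1) (Pi.single k 1) := by
        refine Finset.sum_congr rfl fun i _ => ?_
        rw [hcol i]
        simp only [map_sum, _root_.map_smul, ContinuousLinearMap.sum_apply,
          ContinuousLinearMap.smul_apply, smul_eq_mul, Finset.mul_sum, Finset.sum_mul]
        rw [Finset.sum_comm]
        refine Finset.sum_congr rfl fun j _ => Finset.sum_congr rfl fun k _ => by ring
    _ = ∑ j, ∑ k, (∑ i, R j i * R k i) * B (Pi.single j 1) (Pi.single k 1) := by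
        rw [Finset.sum_comm]
        refine Finset.sum_congr rfl fun j _ => ?_
        rw [Finset.sum_comm]
        exact Finset.sum_congr rfl fun k _ => by rw [← Finset.sum_mul]
    _ = ∑ j, B (Pi.single j 1) (Pi.single j 1) := by
        refine Finset.sum_congr rfl fun j _ => ?_
        have h1 : ∀ k, (∑ i, R j i * R k i) = (1 : Matrix (Fin n) (Fin n) ℝ) j k := by
          intro k; rw [← hR]; simp [Matrix.mul_apply]
        simp only [h1, Matrix.one_apply]
        rw [Finset.sum_eq_single j]
        · simp
        · intro k _ hk; simp [Ne.symm hk]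
        · simp

section Spatial

variable (Q : (Fin n → ℝ) → ℝ) (c : ℂ) (β a : ℝ)
  (R : Matrix (Fin n) (Fin n) ℝ) (x₁ : Fin n → ℝ)

/-- the spatial profile -/
noncomputable def wfun : (Fin n → ℝ) → ℂ := fun z =>
  c * Complex.exp (-Complex.I * ((β * ∑ i, (z i)^2 : ℝ) : ℂ))
    * ((Q (a • R.mulVec z - x₁) : ℝ) : ℂ)

noncomputable def LA : (Fin n → ℝ) →L[ℝ] (Fin n → ℝ) :=
  a • (LinearMap.toContinuousLinearMap R.mulVecLin)

lemma LA_apply (v : Fin n → ℝ) : LA a R v = a • R.mulVec v := rfl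

lemma hy_hasFDerivAt (z : Fin n → ℝ) :
    HasFDerivAt (fun z : Fin n → ℝ => a • R.mulVec z - x₁) (LA a R) z :=
  ((LinearMap.toContinuousLinearMap R.mulVecLin).hasFDerivAt.const_smul a).sub_const x₁

noncomputable def Lq (z : Fin n → ℝ) : (Fin n → ℝ) →L[ℝ] ℝ :=
  ∑ i, (2 * z i) • (ContinuousLinearMap.proj i : (Fin n → ℝ) →L[ℝ] ℝ)

lemma hexp_hasFDerivAt (z : Fin n → ℝ) :
    HasFDerivAt (fun z : Fin n → ℝ => Complex.exp (-Complex.I * ((β * ∑ i, (z i)^2 : ℝ) : ℂ)))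
      (Complex.exp (-Complex.I * ((β * ∑ i, (z i)^2 : ℝ) : ℂ)) •
        ((-Complex.I) • (Complex.ofRealCLM.comp (β • Lq z)))) z := by
  have h2 : HasFDerivAt (fun z : Fin n → ℝ => β * ∑ i, (z i)^2) (β • Lq z) z :=
    (sum_sq_hasFDerivAt z).const_mul β
  have h3 := Complex.ofRealCLM.hasFDerivAt.comp z h2
  have h4 := h3.const_mul (-Complex.I)
  exact h4.cexp

variable {Q} in
lemma hQc_hasFDerivAt (hQ : ContDiff ℝ (⊤ : ℕ∞) Q) (z : Fin n → ℝ) :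
    HasFDerivAt (fun z : Fin n → ℝ => ((Q (a • R.mulVec z - x₁) : ℝ) : ℂ))
      (Complex.ofRealCLM.comp ((fderiv ℝ Q (a • R.mulVec z - x₁)).comp (LA a R))) z := by
  have hQy := ((hQ.differentiable (by simp)) (a • R.mulVec z - x₁)).hasFDerivAt
  exact Complex.ofRealCLM.hasFDerivAt.comp z (hQy.comp z (hy_hasFDerivAt a R x₁ z))

variable {Q} in
lemma grad_eval (hQ : ContDiff ℝ (⊤ : ℕ∞) Q) (z v : Fin n → ℝ) :
    fderiv ℝ (wfun Q c β a R x₁) z v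
      = c * Complex.exp (-Complex.I * ((β * ∑ i, (z i)^2 : ℝ) : ℂ))
        * ( (-2) * Complex.I * β * ((∑ i, z i * v i : ℝ) : ℂ)
              * ((Q (a • R.mulVec z - x₁) : ℝ) : ℂ)
            + ((a * fderiv ℝ Q (a • R.mulVec z - x₁) (R.mulVec v) : ℝ) : ℂ) ) := by
  have hw := ((hexp_hasFDerivAt β z).const_mul c).mul (hQc_hasFDerivAt a R x₁ hQ z)
  unfold wfun
  erw [hw.fderiv]
  simp only [ContinuousLinearMap.add_apply, ContinuousLinearMap.smul_apply,
    ContinuousLinearMap.coe_comp', Function.comp_apply, Complex.ofRealCLM_apply,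
    LA_apply, _root_.map_smul, smul_eq_mul, Lq, sum_sq_deriv_apply]
  push_cast
  ring

variable {Q} in
lemma laplacian_eq_sum_bilin (hQ : ContDiff ℝ (⊤ : ℕ∞) Q) (p : Fin n → ℝ) :
    laplacian Q p = ∑ i, fderiv ℝ (fderiv ℝ Q) p (Pi.single i 1) (Pi.single i 1) := by
  unfold laplacian
  refine Finset.sum_congr rfl fun i _ => ?_
  have hD1 := ((hQ.fderiv_right (m := 1) (by exact WithTop.coe_le_coe.mpr le_top)).differentiable one_ne_zero p).hasFDerivAt
  have h : HasFDerivAt (fun y => fderiv ℝ Q y (Pi.single i 1))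
      ((ContinuousLinearMap.apply ℝ ℝ (Pi.single i 1)).comp (fderiv ℝ (fderiv ℝ Q) p)) p := by
    simpa [Function.comp_def] using
      (ContinuousLinearMap.apply ℝ ℝ (Pi.single i 1)).hasFDerivAt.comp p hD1
  rw [h.fderiv]
  rfl

variable {Q} in
lemma laplacian_w (hQ : ContDiff ℝ (⊤ : ℕ∞) Q) (hR : R * Rᵀ = 1) (x : Fin n → ℝ) :
    laplacian (wfun Q c β a R x₁) x
      = c * Complex.exp (-Complex.I * ((β * ∑ i, (x i)^2 : ℝ) : ℂ))
        * ( ((-4)*(β:ℂ)^2*((∑ i, (x i)^2 : ℝ):ℂ) - 2*Complex.I*β*n)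
              * ((Q (a • R.mulVec x - x₁) : ℝ) : ℂ)
            - 4*Complex.I*β*a*((fderiv ℝ Q (a • R.mulVec x - x₁) (R.mulVec x) : ℝ) : ℂ)
            + (a:ℂ)^2 * ((laplacian Q (a • R.mulVec x - x₁) : ℝ) : ℂ) ) := by
  have hy := hy_hasFDerivAt (n := n) a R x₁
  set y := a • R.mulVec x - x₁ with hydef
  set E := Complex.exp (-Complex.I * ((β * ∑ i, (x i)^2 : ℝ) : ℂ)) with hE
  set r : Fin n → (Fin n → ℝ) := fun i => R.mulVec (Pi.single i 1) with hr
  have hQy : ∀ z, HasFDerivAt (fun z : Fin n → ℝ => Q (a • R.mulVec z - x₁))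
      ((fderiv ℝ Q (a • R.mulVec z - x₁)).comp (LA a R)) z := fun z =>
    ((hQ.differentiable (by simp)) _).hasFDerivAt.comp z (hy z)
  have hD1 : ∀ z : Fin n → ℝ, HasFDerivAt (fun w : Fin n → ℝ => fderiv ℝ Q (a • R.mulVec w - x₁))
      ((fderiv ℝ (fderiv ℝ Q) (a • R.mulVec z - x₁)).comp (LA a R)) z := fun z =>
    (((hQ.fderiv_right (m := 1) (by exact WithTop.coe_le_coe.mpr le_top)).differentiable one_ne_zero) _).hasFDerivAt.comp z (hy z)
  -- step 1 : the first partial derivatives as explicit functions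
  have step1 : ∀ i : Fin n, (fun z => fderiv ℝ (wfun Q c β a R x₁) z (Pi.single i 1))
      = fun z => c * Complex.exp (-Complex.I * ((β * ∑ j, (z j)^2 : ℝ) : ℂ))
        * ( ((-2) * Complex.I * β) * ((z i * Q (a • R.mulVec z - x₁) : ℝ) : ℂ)
            + ((a * fderiv ℝ Q (a • R.mulVec z - x₁) (r i) : ℝ) : ℂ) ) := by
    intro i
    funext z
    rw [grad_eval c β a R x₁ hQ z (Pi.single i 1)]
    have : ∑ j, z j * (Pi.single i 1 : Fin n → ℝ) j = z i := by
      simp [Pi.single_apply]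
    rw [this, hr]
    push_cast
    ring
  -- step 2 : differentiate these again
  have step2 : ∀ i : Fin n,
      fderiv ℝ (fun z => fderiv ℝ (wfun Q c β a R x₁) z (Pi.single i 1)) x (Pi.single i 1)
      = c * E * ( ((-2) * Complex.I * β * (x i : ℂ))
            * ( ((-2) * Complex.I * β) * ((x i * Q y : ℝ) : ℂ)
                + ((a * fderiv ℝ Q y (r i) : ℝ) : ℂ) )
          + ( ((-2) * Complex.I * β) * ((x i * (a * fderiv ℝ Q y (r i)) + Q y * 1 : ℝ) : ℂ)
              + ((a * (a * fderiv ℝ (fderiv ℝ Q) y (r i) (r i)) : ℝ) : ℂ) ) ) := by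
    intro i
    rw [step1 i]
    have hA : HasFDerivAt (fun z : Fin n → ℝ => z i * Q (a • R.mulVec z - x₁))
        ((x i) • ((fderiv ℝ Q y).comp (LA a R))
          + (Q y) • (ContinuousLinearMap.proj i : (Fin n → ℝ) →L[ℝ] ℝ)) x := by
      simpa [Pi.mul_def] using ((ContinuousLinearMap.proj i : (Fin n → ℝ) →L[ℝ] ℝ)).hasFDerivAt.mul (hQy x)
    have hAc := (Complex.ofRealCLM.hasFDerivAt.comp x hA).const_mul ((-2) * Complex.I * β)
    have hB := (ContinuousLinearMap.apply ℝ ℝ (r i)).hasFDerivAt.comp x (hD1 x)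
    have hBc' : HasFDerivAt (fun z : Fin n → ℝ => ((a * fderiv ℝ Q (a • R.mulVec z - x₁) (r i) : ℝ) : ℂ))
        (Complex.ofRealCLM.comp (a • ((ContinuousLinearMap.apply ℝ ℝ (r i)).comp
          ((fderiv ℝ (fderiv ℝ Q) y).comp (LA a R))))) x :=
      Complex.ofRealCLM.hasFDerivAt.comp x (hB.const_mul a)
    have hGi := ((hexp_hasFDerivAt β x).const_mul c).mul (hAc.add hBc')
    have hfd : fderiv ℝ (fun z =>
        c * Complex.exp (-Complex.I * ((β * ∑ j, (z j)^2 : ℝ) : ℂ))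
          * ( ((-2) * Complex.I * β) * ((z i * Q (a • R.mulVec z - x₁) : ℝ) : ℂ)
              + ((a * fderiv ℝ Q (a • R.mulVec z - x₁) (r i) : ℝ) : ℂ) )) x
        = _ := hGi.fderiv
    rw [hfd]
    simp only [ContinuousLinearMap.add_apply, ContinuousLinearMap.smul_apply,
      ContinuousLinearMap.coe_comp', Function.comp_apply, Complex.ofRealCLM_apply,
      ContinuousLinearMap.proj_apply, LA_apply, _root_.map_smul, smul_eq_mul, Lq,
      sum_sq_deriv_apply, ContinuousLinearMap.apply_apply, Pi.add_apply]
    have h1 : (Pi.single i 1 : Fin n → ℝ) i = 1 := by simp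
    have h2 : ∑ j, x j * (Pi.single i 1 : Fin n → ℝ) j = x i := by simp [Pi.single_apply]
    rw [h1, h2, ← hE]
    push_cast
    ring
  -- step 3 : sum up
  rw [laplacian]
  rw [Finset.sum_congr rfl (fun i _ => step2 i)]
  have key : ∀ i : Fin n, c * E * ( ((-2) * Complex.I * β * (x i : ℂ))
            * ( ((-2) * Complex.I * β) * ((x i * Q y : ℝ) : ℂ)
                + ((a * fderiv ℝ Q y (r i) : ℝ) : ℂ) )
          + ( ((-2) * Complex.I * β) * ((x i * (a * fderiv ℝ Q y (r i)) + Q y * 1 : ℝ) : ℂ)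
              + ((a * (a * fderiv ℝ (fderiv ℝ Q) y (r i) (r i)) : ℝ) : ℂ) ) )
      = c * E * ( ((-4) * (β:ℂ)^2 * (Q y : ℂ)) * ((x i : ℂ))^2
          + ((-4) * Complex.I * β * a) * ((x i * fderiv ℝ Q y (r i) : ℝ) : ℂ)
          + ((-2) * Complex.I * β) * ((Q y : ℝ) : ℂ)
          + (a:ℂ)^2 * ((fderiv ℝ (fderiv ℝ Q) y (r i) (r i) : ℝ) : ℂ) ) := by
    intro i
    push_cast
    ring_nf
    rw [Complex.I_sq]
    ring
  rw [Finset.sum_congr rfl (fun i _ => key i)]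
  rw [← Finset.mul_sum]
  have hsplit : ∑ i : Fin n, ( ((-4) * (β:ℂ)^2 * (Q y : ℂ)) * ((x i : ℂ))^2
          + ((-4) * Complex.I * β * a) * ((x i * fderiv ℝ Q y (r i) : ℝ) : ℂ)
          + ((-2) * Complex.I * β) * ((Q y : ℝ) : ℂ)
          + (a:ℂ)^2 * ((fderiv ℝ (fderiv ℝ Q) y (r i) (r i) : ℝ) : ℂ) )
      = ((-4) * (β:ℂ)^2 * (Q y : ℂ)) * (∑ i : Fin n, ((x i : ℂ))^2)
          + ((-4) * Complex.I * β * a) * (∑ i : Fin n, ((x i * fderiv ℝ Q y (r i) : ℝ) : ℂ))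
          + ((-2) * Complex.I * β) * (n : ℂ) * ((Q y : ℝ) : ℂ)
          + (a:ℂ)^2 * (∑ i : Fin n, ((fderiv ℝ (fderiv ℝ Q) y (r i) (r i) : ℝ) : ℂ)) := by
    simp only [Finset.sum_add_distrib, ← Finset.mul_sum, Finset.sum_const, Finset.card_univ,
      Fintype.card_fin, nsmul_eq_mul]
    ring
  rw [hsplit]
  have hgrad : ∑ i : Fin n, x i * fderiv ℝ Q y (r i) = fderiv ℝ Q y (R.mulVec x) := by
    have h := clm_apply_eq_sum
      ((fderiv ℝ Q y).comp (LinearMap.toContinuousLinearMap R.mulVecLin)) x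
    simpa [smul_eq_mul, hr] using h.symm
  have hlap : ∑ i : Fin n, fderiv ℝ (fderiv ℝ Q) y (r i) (r i) = laplacian Q y := by
    rw [hr]
    rw [bilin_orth (fderiv ℝ (fderiv ℝ Q) y) R hR]
    exact (laplacian_eq_sum_bilin hQ y).symm
  have c1 : (∑ i : Fin n, ((x i : ℂ))^2) = ((∑ i, (x i)^2 : ℝ) : ℂ) := by push_cast; ring
  have c2 : (∑ i : Fin n, ((x i * fderiv ℝ Q y (r i) : ℝ) : ℂ))
      = ((fderiv ℝ Q y (R.mulVec x) : ℝ) : ℂ) := by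
    rw [← Complex.ofReal_sum, hgrad]
  have c3 : (∑ i : Fin n, ((fderiv ℝ (fderiv ℝ Q) y (r i) (r i) : ℝ) : ℂ))
      = ((laplacian Q y : ℝ) : ℂ) := by
    rw [← Complex.ofReal_sum, hlap]
  rw [c1, c2, c3]
  push_cast
  ring

end Spatial
variable {n : ℕ}

lemma skew_dot_zero (M : Matrix (Fin n) (Fin n) ℝ) (hM : Mᵀ = -M) (x : Fin n → ℝ) :
    ∑ i, x i * M.mulVec x i = 0 := by
  have h1 : ∑ i, x i * M.mulVec x i = x ⬝ᵥ M.mulVec x := rfl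
  have h2 : x ᵥ* M = Mᵀ *ᵥ x := by
    rw [← Matrix.transpose_transpose M, Matrix.vecMul_transpose, Matrix.transpose_transpose]
  have h3 : x ⬝ᵥ M *ᵥ x = - (x ⬝ᵥ M *ᵥ x) := by
    calc x ⬝ᵥ M *ᵥ x = x ᵥ* M ⬝ᵥ x := Matrix.dotProduct_mulVec x M x
    _ = Mᵀ *ᵥ x ⬝ᵥ x := by rw [h2]
    _ = -(M *ᵥ x) ⬝ᵥ x := by rw [hM, Matrix.neg_mulVec]
    _ = -(M *ᵥ x ⬝ᵥ x) := by simp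
    _ = - (x ⬝ᵥ M *ᵥ x) := by rw [dotProduct_comm]
  rw [h1]; linarith

lemma norm_cexp_I_mul (a : ℝ) : ‖Complex.exp (Complex.I * (a : ℂ))‖ = 1 := by
  simp [Complex.norm_exp]

lemma norm_cexp_neg_I_mul (a : ℝ) : ‖Complex.exp (-Complex.I * (a : ℂ))‖ = 1 := by
  simp [Complex.norm_exp]

lemma exp_skew_orth (M : Matrix (Fin n) (Fin n) ℝ) (hM : Mᵀ = -M) (t : ℝ) :
    (NormedSpace.exp (t • M)) * (NormedSpace.exp (t • M))ᵀ = 1 := by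
  letI : SeminormedRing (Matrix (Fin n) (Fin n) ℝ) := Matrix.linftyOpSemiNormedRing
  letI : NormedRing (Matrix (Fin n) (Fin n) ℝ) := Matrix.linftyOpNormedRing
  letI : NormedAlgebra ℝ (Matrix (Fin n) (Fin n) ℝ) := Matrix.linftyOpNormedAlgebra
  rw [← Matrix.exp_transpose]
  have h : (t • M)ᵀ = -(t • M) := by rw [Matrix.transpose_smul, hM]; module
  rw [h, ← Matrix.exp_add_of_commute (t • M) (-(t • M)) (Commute.neg_right rfl)]
  simp

lemma exp_mulVec_hasDerivAt (M : Matrix (Fin n) (Fin n) ℝ) (x : Fin n → ℝ) (t : ℝ) :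
    HasDerivAt (fun τ : ℝ => (NormedSpace.exp (τ • M)).mulVec x)
      ((NormedSpace.exp (t • M) * M).mulVec x) t := by
  letI : SeminormedRing (Matrix (Fin n) (Fin n) ℝ) := Matrix.linftyOpSemiNormedRing
  letI : NormedRing (Matrix (Fin n) (Fin n) ℝ) := Matrix.linftyOpNormedRing
  letI : NormedAlgebra ℝ (Matrix (Fin n) (Fin n) ℝ) := Matrix.linftyOpNormedAlgebra
  have h1 : HasDerivAt (fun τ : ℝ => NormedSpace.exp (τ • M))
      (NormedSpace.exp (t • M) * M) t := hasDerivAt_exp_smul_const M t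
  let L : Matrix (Fin n) (Fin n) ℝ →ₗ[ℝ] (Fin n → ℝ) :=
    { toFun := fun A => A.mulVec x
      map_add' := fun A B => Matrix.add_mulVec A B x
      map_smul' := fun r A => Matrix.smul_mulVec r A x }
  have h2 := (LinearMap.toContinuousLinearMap L).hasFDerivAt.comp_hasDerivAt t h1
  exact h2

set_option maxHeartbeats 1000000 in
/-- The minimal-mass blowup profile built from a solution `Q` of
`ΔQ − Q + |Q|^{4/n}Q = 0` solves the rotational NLS
`i∂ₜu = −Δu + γ²|x|²u − |u|^{4/n}u + i(Mx)·∇u` on `[0,T) × ℝⁿ`. -/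
theorem minimal_mass_profile_solves_rotational_NLS
    (n : ℕ) (hn : 1 ≤ n) (γ : ℝ) (hγ : 0 < γ)
    (M : Matrix (Fin n) (Fin n) ℝ) (hM : Mᵀ = -M)
    (x₁ : Fin n → ℝ)
    (T : ℝ) (hT : 0 < T) (hT' : T < Real.pi/(4*γ))
    (Q : (Fin n → ℝ) → ℝ) (hQ_smooth : ContDiff ℝ (⊤ : ℕ∞) Q)
    (hQ : ∀ x : Fin n → ℝ, laplacian Q x - Q x + |Q x| ^ ((4 : ℝ)/n) * Q x = 0)
    (u : ℝ → (Fin n → ℝ) → ℂ)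
    (hu : ∀ t x, u t x
      = (((2*γ*Real.cos (2*γ*T) / Real.sin (2*γ*(T - t))) ^ ((n : ℝ)/2) : ℝ) : ℂ)
        * Complex.exp (-Complex.I * (((γ/2) * (∑ i, (x i)^2)
            * (Real.cos (2*γ*(T - t)) / Real.sin (2*γ*(T - t))) : ℝ) : ℂ))
        * Complex.exp (Complex.I * ((2*γ*Real.cos (2*γ*T)*Real.cos (2*γ*t)
            / Real.sin (2*γ*(T - t)) : ℝ) : ℂ))
        * ((Q ((2*γ*Real.cos (2*γ*T) / Real.sin (2*γ*(T - t)))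
              • (NormedSpace.exp (t • M)).mulVec x - x₁) : ℝ) : ℂ)) :
    ∀ t ∈ Ico (0 : ℝ) T, ∀ x : Fin n → ℝ,
      Complex.I * derivWithin (fun s => u s x) (Ico (0 : ℝ) T) t
        = -(laplacian (u t) x)
          + ((γ^2 * ∑ i, (x i)^2 : ℝ) : ℂ) * u t x
          - ((‖u t x‖ ^ ((4 : ℝ)/n) : ℝ) : ℂ) * u t x
          + Complex.I * fderiv ℝ (u t) x (M.mulVec x) := by
  intro t ht x
  obtain ⟨ht0, htT⟩ := ht
  have hn0 : (n : ℝ) ≠ 0 := Nat.cast_ne_zero.mpr (by omega)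
  -- positivity facts
  have hπ2 : 2*γ*T < Real.pi/2 := by
    have h4 : T * (4*γ) < Real.pi := (lt_div_iff₀ (by positivity)).mp hT'
    linarith
  have harg1 : 0 < 2*γ*(T - t) := by
    have : 0 < T - t := sub_pos.mpr htT
    positivity
  have harg2 : 2*γ*(T - t) < Real.pi/2 := by nlinarith
  have hs : 0 < Real.sin (2*γ*(T - t)) :=
    Real.sin_pos_of_pos_of_lt_pi harg1 (by linarith [Real.pi_pos])
  have hsne : Real.sin (2*γ*(T - t)) ≠ 0 := ne_of_gt hs
  have hcT : 0 < Real.cos (2*γ*T) := by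
    apply Real.cos_pos_of_mem_Ioo
    constructor
    · nlinarith [Real.pi_pos]
    · exact hπ2
  -- abbreviations
  set sv : ℝ := Real.sin (2*γ*(T - t)) with hsv_def
  set cv : ℝ := Real.cos (2*γ*(T - t)) with hcv_def
  set cT : ℝ := Real.cos (2*γ*T) with hcT_def
  set lam : ℝ := 2*γ*cT / sv with hlam_def
  set β : ℝ := γ/2 * (cv/sv) with hβ_def
  set q : ℝ := ∑ i, (x i)^2 with hq_def
  set Rm : Matrix (Fin n) (Fin n) ℝ := NormedSpace.exp (t • M) with hRm_def
  set yv : Fin n → ℝ := lam • Rm.mulVec x - x₁ with hyv_def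
  have hlam : 0 < lam := by rw [hlam_def]; positivity
  have hlamne : lam ≠ 0 := ne_of_gt hlam
  have hRorth : Rm * Rmᵀ = 1 := exp_skew_orth M hM t
  -- complex factor abbreviations
  set E2 : ℂ := Complex.exp (-Complex.I * ((β * q : ℝ) : ℂ)) with hE2_def
  set E3 : ℂ := Complex.exp (Complex.I * ((2*γ*cT*Real.cos (2*γ*t) / sv : ℝ) : ℂ)) with hE3_def
  set r1 : ℝ := lam ^ ((n : ℝ)/2) with hr1_def
  ----------------------------------------------------------------
  -- time derivative
  ----------------------------------------------------------------
  have hinner : HasDerivAt (fun τ : ℝ => 2*γ*(T - τ)) (-(2*γ)) t := by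
    simpa using ((hasDerivAt_id t).const_sub T).const_mul (2*γ)
  have hsin : HasDerivAt (fun τ : ℝ => Real.sin (2*γ*(T - τ))) (-(2*γ)*cv) t := by
    simpa [hcv_def, mul_comm, Function.comp_def] using (Real.hasDerivAt_sin (2*γ*(T - t))).comp t hinner
  have hcos : HasDerivAt (fun τ : ℝ => Real.cos (2*γ*(T - τ))) (2*γ*sv) t := by
    have := (Real.hasDerivAt_cos (2*γ*(T - t))).comp t hinner
    rw [hsv_def]
    exact this.congr_deriv (by ring)
  have hdivlam : HasDerivAt (fun τ : ℝ => 2*γ*cT / Real.sin (2*γ*(T - τ))) (lam * (4*β)) t := by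
    have h := (hasDerivAt_const t (2*γ*cT)).fun_div hsin hsne
    refine h.congr_deriv ?_
    rw [← hsv_def]
    rw [hlam_def, hβ_def]
    field_simp
    ring
  have hr1' : HasDerivAt (fun τ : ℝ => (2*γ*cT / Real.sin (2*γ*(T - τ))) ^ ((n : ℝ)/2))
      (((n : ℝ)/2) * (4*β) * r1) t := by
    have h := hdivlam.rpow_const (p := (n : ℝ)/2) (Or.inl hlamne)
    have hpow : lam ^ ((n : ℝ)/2 - 1) * lam = r1 := by
      rw [hr1_def, Real.rpow_sub_one hlamne]
      field_simp
    convert h using 1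
    rw [← hpow]
    ring
  have hph1 : HasDerivAt
      (fun τ : ℝ => γ/2 * q * (Real.cos (2*γ*(T - τ)) / Real.sin (2*γ*(T - τ))))
      ((γ^2 + 4*β^2) * q) t := by
    have h := (hcos.fun_div hsin hsne).const_mul (γ/2 * q)
    refine h.congr_deriv ?_
    rw [← hsv_def, ← hcv_def]
    have hpy : sv^2 + cv^2 = 1 := by
      rw [hsv_def, hcv_def]; exact Real.sin_sq_add_cos_sq _
    rw [hβ_def]
    field_simp
    nlinarith [hpy]
  have hph3 : HasDerivAt
      (fun τ : ℝ => 2*γ*cT*Real.cos (2*γ*τ) / Real.sin (2*γ*(T - τ))) (lam^2) t := by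
    have hi2 : HasDerivAt (fun τ : ℝ => 2*γ*τ) (2*γ) t := by
      simpa using (hasDerivAt_id t).const_mul (2*γ)
    have hnum : HasDerivAt (fun τ : ℝ => 2*γ*cT*Real.cos (2*γ*τ))
        (2*γ*cT*(-Real.sin (2*γ*t)*(2*γ))) t :=
      ((Real.hasDerivAt_cos (2*γ*t)).comp t hi2).const_mul (2*γ*cT)
    have h := hnum.fun_div hsin hsne
    refine h.congr_deriv ?_
    rw [← hsv_def]
    have hadd : Real.cos (2*γ*t) * cv - Real.sin (2*γ*t) * sv = cT := by
      rw [hcv_def, hsv_def, hcT_def, ← Real.cos_add]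
      congr 1
      ring
    rw [hlam_def]
    field_simp
    nlinarith [hadd]
  have hvec : HasDerivAt
      (fun τ : ℝ => (2*γ*cT / Real.sin (2*γ*(T - τ))) • (NormedSpace.exp (τ • M)).mulVec x - x₁)
      (lam • (Rm * M).mulVec x + (lam * (4*β)) • Rm.mulVec x) t := by
    have h := (hdivlam.smul (exp_mulVec_hasDerivAt M x t)).sub_const x₁
    exact h
  have hQt : HasDerivAt
      (fun τ : ℝ => Q ((2*γ*cT / Real.sin (2*γ*(T - τ))) • (NormedSpace.exp (τ • M)).mulVec x - x₁))
      (fderiv ℝ Q yv (lam • (Rm * M).mulVec x + (lam * (4*β)) • Rm.mulVec x)) t := by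
    have h := (hQ_smooth.differentiable (by simp) _).hasFDerivAt.comp_hasDerivAt t hvec
    exact h
  -- assemble the four factors
  have hF1 : HasDerivAt (fun τ : ℝ => (((2*γ*cT / Real.sin (2*γ*(T - τ))) ^ ((n : ℝ)/2) : ℝ) : ℂ))
      ((((n : ℝ)/2) * (4*β) * r1 : ℝ) : ℂ) t := hr1'.ofReal_comp
  have hF2 : HasDerivAt (fun τ : ℝ => Complex.exp (-Complex.I *
        ((γ/2 * q * (Real.cos (2*γ*(T - τ)) / Real.sin (2*γ*(T - τ))) : ℝ) : ℂ)))
      (E2 * (-Complex.I * (((γ^2 + 4*β^2) * q : ℝ) : ℂ))) t := by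
    have he2 : Complex.exp (-Complex.I *
        ((γ/2 * q * (Real.cos (2*γ*(T - t)) / Real.sin (2*γ*(T - t))) : ℝ) : ℂ)) = E2 := by
      rw [hE2_def]
      congr 2
      norm_cast
      rw [hβ_def, hcv_def, hsv_def]
      ring
    have h := (hph1.ofReal_comp.const_mul (-Complex.I)).cexp
    rw [he2] at h
    exact h
  have hF3 : HasDerivAt (fun τ : ℝ => Complex.exp (Complex.I *
        ((2*γ*cT*Real.cos (2*γ*τ) / Real.sin (2*γ*(T - τ)) : ℝ) : ℂ)))
      (E3 * (Complex.I * ((lam^2 : ℝ) : ℂ))) t := by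
    have he3 : Complex.exp (Complex.I *
        ((2*γ*cT*Real.cos (2*γ*t) / Real.sin (2*γ*(T - t)) : ℝ) : ℂ)) = E3 := by
      rw [hE3_def]
    have h := (hph3.ofReal_comp.const_mul Complex.I).cexp
    rw [he3] at h
    exact h
  have hF4 : HasDerivAt (fun τ : ℝ =>
      ((Q ((2*γ*cT / Real.sin (2*γ*(T - τ))) • (NormedSpace.exp (τ • M)).mulVec x - x₁) : ℝ) : ℂ))
      ((fderiv ℝ Q yv (lam • (Rm * M).mulVec x + (lam * (4*β)) • Rm.mulVec x) : ℝ) : ℂ) t :=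
    hQt.ofReal_comp
  have hprod := ((hF1.mul hF2).mul hF3).mul hF4
  have htime : (fun τ : ℝ => u τ x) = (fun τ : ℝ =>
      (((2*γ*cT / Real.sin (2*γ*(T - τ))) ^ ((n : ℝ)/2) : ℝ) : ℂ)
      * Complex.exp (-Complex.I *
          ((γ/2 * q * (Real.cos (2*γ*(T - τ)) / Real.sin (2*γ*(T - τ))) : ℝ) : ℂ))
      * Complex.exp (Complex.I *
          ((2*γ*cT*Real.cos (2*γ*τ) / Real.sin (2*γ*(T - τ)) : ℝ) : ℂ))
      * ((Q ((2*γ*cT / Real.sin (2*γ*(T - τ))) • (NormedSpace.exp (τ • M)).mulVec x - x₁) : ℝ) : ℂ)) := by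
    funext τ
    rw [hu τ x, hcT_def, hq_def]
  have hdw : derivWithin (fun s => u s x) (Ico (0 : ℝ) T) t
      = (((((n : ℝ)/2) * (4*β) * r1 : ℝ) : ℂ) * E2 * E3 * ((Q yv : ℝ) : ℂ))
        + ((r1 : ℝ) : ℂ) * (E2 * (-Complex.I * (((γ^2 + 4*β^2) * q : ℝ) : ℂ))) * E3 * ((Q yv : ℝ) : ℂ)
        + ((r1 : ℝ) : ℂ) * E2 * (E3 * (Complex.I * ((lam^2 : ℝ) : ℂ))) * ((Q yv : ℝ) : ℂ)
        + ((r1 : ℝ) : ℂ) * E2 * E3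
            * ((fderiv ℝ Q yv (lam • (Rm * M).mulVec x + (lam * (4*β)) • Rm.mulVec x) : ℝ) : ℂ) := by
    rw [htime]
    have h := hprod.hasDerivWithinAt.derivWithin ((uniqueDiffOn_Ico (0:ℝ) T) t ⟨ht0, htT⟩)
    erw [h]
    simp only [hE2_def, hE3_def, hr1_def, hβ_def, hlam_def, hq_def, hyv_def, hRm_def,
      hcT_def, hsv_def, hcv_def, Pi.mul_apply]
    push_cast
    ring_nf
  ----------------------------------------------------------------
  -- spatial side
  ----------------------------------------------------------------
  have hphase : ((γ/2) * (∑ i, (x i)^2)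
      * (Real.cos (2*γ*(T - t)) / Real.sin (2*γ*(T - t))) : ℝ) = (β * q : ℝ) := by
    rw [hβ_def, hcv_def, hsv_def, hq_def]
    ring
  have hut : u t = wfun Q (((r1 : ℝ) : ℂ) * E3) β lam Rm x₁ := by
    funext z
    rw [hu t z]
    simp only [wfun]
    have hph' : ((γ/2) * (∑ i, (z i)^2)
        * (Real.cos (2*γ*(T - t)) / Real.sin (2*γ*(T - t))) : ℝ) = (β * ∑ i, (z i)^2 : ℝ) := by
      rw [hβ_def, hcv_def, hsv_def]
      ring
    rw [hph', ← hsv_def, ← hlam_def, ← hr1_def, ← hE3_def, ← hRm_def]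
    ring
  have hlap := laplacian_w (Q := Q) (((r1 : ℝ) : ℂ) * E3) β lam Rm x₁ hQ_smooth hRorth x
  rw [← hq_def, ← hE2_def, ← hyv_def] at hlap
  have hgrad := grad_eval (Q := Q) (((r1 : ℝ) : ℂ) * E3) β lam Rm x₁ hQ_smooth x (M.mulVec x)
  rw [← hq_def, ← hE2_def, ← hyv_def, skew_dot_zero M hM x] at hgrad
  have hnormu : ‖wfun Q (((r1 : ℝ) : ℂ) * E3) β lam Rm x₁ x‖ ^ ((4:ℝ)/(n:ℝ))
      = lam^2 * |Q yv| ^ ((4:ℝ)/(n:ℝ)) := by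
    have hr1nn : (0:ℝ) ≤ r1 := by rw [hr1_def]; positivity
    have hnw : ‖wfun Q (((r1 : ℝ) : ℂ) * E3) β lam Rm x₁ x‖ = r1 * |Q yv| := by
      simp only [wfun]
      rw [← hq_def, ← hyv_def, hE3_def]
      rw [norm_mul, norm_mul, norm_mul, norm_cexp_I_mul, norm_cexp_neg_I_mul]
      simp [abs_of_nonneg hr1nn]
    rw [hnw, Real.mul_rpow hr1nn (abs_nonneg _), hr1_def]
    have hexp2 : (lam ^ ((n:ℝ)/2)) ^ ((4:ℝ)/(n:ℝ)) = lam ^ 2 := by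
      rw [← Real.rpow_mul hlam.le]
      rw [show (n:ℝ)/2 * (4/(n:ℝ)) = 2 by field_simp; ring]
      rw [show (2:ℝ) = ((2:ℕ):ℝ) by norm_num, Real.rpow_natCast]
    rw [hexp2]
  have hsplit : fderiv ℝ Q yv (lam • (Rm * M).mulVec x + (lam * (4*β)) • Rm.mulVec x)
      = lam * fderiv ℝ Q yv (Rm.mulVec (M.mulVec x))
        + (lam * (4*β)) * fderiv ℝ Q yv (Rm.mulVec x) := by
    rw [map_add, _root_.map_smul, _root_.map_smul, smul_eq_mul, smul_eq_mul,
      ← Matrix.mulVec_mulVec]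
  have hQyeq : laplacian Q yv = Q yv - |Q yv| ^ ((4:ℝ)/(n:ℝ)) * Q yv := by
    linarith [hQ yv]
  rw [hut, hdw, hlap, hgrad, hnormu, hsplit, hQyeq]
  simp only [wfun]
  rw [← hq_def, ← hE2_def, ← hyv_def]
  linear_combination (norm := (push_cast; ring_nf))
    ((lam:ℂ)^2 - ((γ:ℂ)^2 + 4*(β:ℂ)^2)*(q:ℂ)) * ((r1:ℂ) * E2 * E3 * ((Q yv : ℝ):ℂ))
      * Complex.I_sq
end

section
/- Fix n ≥ 1, γ > 0, a real n×n skew-symmetric matrix M, x₁ ∈ ℝⁿ, and T ∈ (0, π/(4γ)). Let Q : ℝⁿ → ℝ be a smooth function such that Q, ∇Q and x ↦ |x|Q(x) all belong to L²(ℝⁿ), with ‖∇Q‖_{L²} > 0. Define u : [0,T) × ℝⁿ → ℂ by u(t,x) = ( 2γ cos(2γT) / sin(2γ(T−t)) )^{n/2} · e^{ −i(γ/2)|x|² cot(2γ(T−t)) } · e^{ i·2γ cos(2γT)cos(2γt)/sin(2γ(T−t)) } · Q( 2γ cos(2γT) exp(tM)x / sin(2γ(T−t)) − x₁ ). Then lim_{t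 → T⁻} (T − t) · ‖∇ₓu(t,·)‖_{L²(ℝⁿ)} = cos(2γT) · ‖∇Q‖_{L²(ℝⁿ)}; in particular ‖∇ₓu(t,·)‖_{L²} blows up at the rate (T−t)^{−1} as t → T. -/
open Matrix Set MeasureTheory Filter

lemma exp_skew_ortho {n : ℕ} (M : Matrix (Fin n) (Fin n) ℝ) (hM : Mᵀ = -M) (t : ℝ) :
    (NormedSpace.exp (t • M))ᵀ * (NormedSpace.exp (t • M)) = 1 ∧
    (NormedSpace.exp (t • M)) * (NormedSpace.exp (t • M))ᵀ = 1 := by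
  have h1 : (NormedSpace.exp (t • M))ᵀ = NormedSpace.exp (-(t • M)) := by
    rw [← Matrix.exp_transpose, transpose_smul, hM, smul_neg]
  constructor
  · rw [h1, ← Matrix.exp_add_of_commute (-(t • M)) (t • M) (Commute.neg_left rfl), neg_add_cancel,
      NormedSpace.exp_zero]
  · rw [h1, ← Matrix.exp_add_of_commute (t • M) (-(t • M)) (Commute.neg_right rfl), add_neg_cancel,
      NormedSpace.exp_zero]

lemma sin_slope_lim : Tendsto (fun u : ℝ => Real.sin u / u) (nhdsWithin 0 {(0:ℝ)}ᶜ) (nhds 1) := by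
  have h := (Real.hasDerivAt_sin 0)
  rw [hasDerivAt_iff_tendsto_slope] at h
  simp only [Real.cos_zero] at h
  refine h.congr fun u => ?_
  simp [slope_def_field]
lemma vecMul_sq_sum {n : ℕ} (R : Matrix (Fin n) (Fin n) ℝ) (hR : R * Rᵀ = 1) (w : Fin n → ℝ) :
    ∑ i, (w ᵥ* R) i ^ 2 = ∑ i, w i ^ 2 := by
  have h : (w ᵥ* R) ⬝ᵥ (w ᵥ* R) = w ⬝ᵥ w := by
    rw [← Matrix.mulVec_transpose, Matrix.dotProduct_mulVec, ← Matrix.mulVec_transpose,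
      Matrix.transpose_transpose, Matrix.mulVec_mulVec, hR, Matrix.one_mulVec]
  simpa [dotProduct, pow_two] using h

set_option maxHeartbeats 1000000 in
lemma ptwise {n : ℕ} (Q : (Fin n → ℝ) → ℝ) (hQ : ContDiff ℝ (⊤ : ℕ∞) Q)
    (a c r θ : ℝ) (ha : 0 ≤ a) (R : Matrix (Fin n) (Fin n) ℝ) (hR : R * Rᵀ = 1)
    (x₁ : Fin n → ℝ) (x : Fin n → ℝ) :
    ∑ i, ‖fderiv ℝ (fun z => ((a ^ ((n:ℝ)/2) : ℝ) : ℂ)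
      * Complex.exp (-Complex.I * ((c * (∑ i, (z i)^2) * r : ℝ) : ℂ))
      * Complex.exp (Complex.I * (θ : ℂ))
      * ((Q (a • R.mulVec z - x₁) : ℝ) : ℂ)) x (Pi.single i 1)‖^2
    = a ^ (n : ℝ) * ((2*c*r)^2 * (∑ i, (x i)^2) * Q (a • R.mulVec x - x₁)^2
        + a^2 * ∑ j, (fderiv ℝ Q (a • R.mulVec x - x₁) (Pi.single j 1))^2) := by
  set y := a • R.mulVec x - x₁ with hy
  set w := fderiv ℝ Q y with hw
  -- derivative of S z = ∑ (z i)^2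
  have hS : HasFDerivAt (fun z : Fin n → ℝ => ∑ i, (z i)^2)
      (∑ i : Fin n, (2 * x i) • ContinuousLinearMap.proj (R := ℝ) (φ := fun _ : Fin n => ℝ) i) x := by
    apply HasFDerivAt.fun_sum
    intro i _
    have h1 := hasFDerivAt_apply (𝕜 := ℝ) i x
    have := h1.fun_mul h1
    simpa [pow_two, two_mul, add_smul] using this
  -- derivative of phase fun z => c * S z * r
  have hp : HasFDerivAt (fun z : Fin n → ℝ => c * (∑ i, (z i)^2) * r)
      (r • (c • (∑ i : Fin n, (2 * x i) • ContinuousLinearMap.proj (R := ℝ) (φ := fun _ : Fin n => ℝ) i))) x :=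
    (hS.const_mul c).mul_const r
  have hpC := Complex.ofRealCLM.hasFDerivAt.comp x hp
  have hg : HasFDerivAt (fun z : Fin n → ℝ => -Complex.I * ((c * (∑ i, (z i)^2) * r : ℝ) : ℂ))
      ((-Complex.I) • (Complex.ofRealCLM.comp
        (r • (c • (∑ i : Fin n, (2 * x i) • ContinuousLinearMap.proj (R := ℝ) (φ := fun _ : Fin n => ℝ) i))))) x :=
    hpC.const_mul (-Complex.I)
  have hE := hg.cexp
  -- derivative of affine map φ z = a • R.mulVec z − x₁
  set Lc : (Fin n → ℝ) →L[ℝ] (Fin n → ℝ) :=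
    LinearMap.toContinuousLinearMap (a • Matrix.mulVecLin R) with hLc
  have hLcApp : ∀ v, Lc v = a • R.mulVec v := by
    intro v; simp [hLc, Matrix.mulVecLin]
  have hφ : HasFDerivAt (fun z : Fin n → ℝ => a • R.mulVec z - x₁) Lc x := by
    have := Lc.hasFDerivAt (x := x)
    have h2 : (fun z : Fin n → ℝ => a • R.mulVec z - x₁) = fun z => Lc z - x₁ := by
      funext z; rw [hLcApp]
    rw [h2]
    exact this.sub_const x₁
  have hQy : HasFDerivAt Q w y := (hQ.differentiable (by simp) y).hasFDerivAt
  have hQφ : HasFDerivAt (fun z : Fin n → ℝ => Q (a • R.mulVec z - x₁)) (w.comp Lc) x :=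
    hQy.comp x hφ
  have hq : HasFDerivAt (fun z : Fin n → ℝ => ((Q (a • R.mulVec z - x₁) : ℝ) : ℂ))
      (Complex.ofRealCLM.comp (w.comp Lc)) x :=
    Complex.ofRealCLM.hasFDerivAt.comp x hQφ
  -- product
  have hEq := hE.fun_mul hq
  have hfull := hEq.const_mul (((a ^ ((n:ℝ)/2) : ℝ) : ℂ) * Complex.exp (Complex.I * (θ : ℂ)))
  have hfun : (fun z => ((a ^ ((n:ℝ)/2) : ℝ) : ℂ)
      * Complex.exp (-Complex.I * ((c * (∑ i, (z i)^2) * r : ℝ) : ℂ))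
      * Complex.exp (Complex.I * (θ : ℂ))
      * ((Q (a • R.mulVec z - x₁) : ℝ) : ℂ))
      = (fun z => (((a ^ ((n:ℝ)/2) : ℝ) : ℂ) * Complex.exp (Complex.I * (θ : ℂ)))
        * (Complex.exp (-Complex.I * ((c * (∑ i, (z i)^2) * r : ℝ) : ℂ))
          * ((Q (a • R.mulVec z - x₁) : ℝ) : ℂ))) := by
    funext z; ring
  rw [hfun]
  rw [hfull.fderiv]
  simp only [ContinuousLinearMap.smul_apply, ContinuousLinearMap.add_apply,
    ContinuousLinearMap.coe_comp', Function.comp_apply, ContinuousLinearMap.coe_sum',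
    Finset.sum_apply, ContinuousLinearMap.proj_apply, Complex.ofRealCLM_apply, hLcApp,
    Pi.single_apply, smul_eq_mul, mul_ite, mul_one, mul_zero, Finset.sum_ite_eq',
    Finset.mem_univ, if_true]
  have hE1 : ‖Complex.exp (-Complex.I * ((c * (∑ i, (x i)^2) * r : ℝ) : ℂ))‖ = 1 := by
    have hre : (-Complex.I * ((c * (∑ i, (x i)^2) * r : ℝ) : ℂ)).re = 0 := by
      simp only [Complex.mul_re, Complex.neg_re, Complex.neg_im, Complex.I_re, Complex.I_im,
        Complex.ofReal_re, Complex.ofReal_im]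
      ring
    rw [Complex.norm_exp, hre, Real.exp_zero]
  have hP1 : ‖Complex.exp (Complex.I * (θ:ℂ))‖ = 1 := by
    have hre : (Complex.I * (θ:ℂ)).re = 0 := by simp
    rw [Complex.norm_exp, hre, Real.exp_zero]
  have hA2 : (a ^ ((n:ℝ)/2))^2 = a ^ (n:ℝ) := by
    rw [← Real.rpow_natCast (a ^ ((n:ℝ)/2)) 2, ← Real.rpow_mul ha]
    norm_num
  have key : ∀ i : Fin n,
      ‖((a ^ ((n:ℝ)/2) : ℝ) : ℂ) * Complex.exp (Complex.I * (θ:ℂ)) *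
            (Complex.exp (-Complex.I * ((c * (∑ i, (x i)^2) * r : ℝ) : ℂ))
                * ((w (a • R.mulVec (Pi.single i 1)) : ℝ) : ℂ) +
              ((Q (a • R.mulVec x - x₁) : ℝ) : ℂ) *
                (Complex.exp (-Complex.I * ((c * (∑ i, (x i)^2) * r : ℝ) : ℂ)) *
                  (-Complex.I * ((r * (c * (2 * x i)) : ℝ) : ℂ))))‖ ^ 2
      = (a ^ ((n:ℝ)/2))^2 *
          ((a * w (R.mulVec (Pi.single i 1)))^2 + (Q y * (r * (c * (2 * x i))))^2) := by
    intro i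
    have hz : ((a ^ ((n:ℝ)/2) : ℝ) : ℂ) * Complex.exp (Complex.I * (θ:ℂ)) *
            (Complex.exp (-Complex.I * ((c * (∑ i, (x i)^2) * r : ℝ) : ℂ))
                * ((w (a • R.mulVec (Pi.single i 1)) : ℝ) : ℂ) +
              ((Q (a • R.mulVec x - x₁) : ℝ) : ℂ) *
                (Complex.exp (-Complex.I * ((c * (∑ i, (x i)^2) * r : ℝ) : ℂ)) *
                  (-Complex.I * ((r * (c * (2 * x i)) : ℝ) : ℂ))))
        = (((a ^ ((n:ℝ)/2) : ℝ) : ℂ) * Complex.exp (Complex.I * (θ:ℂ)) *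
            Complex.exp (-Complex.I * ((c * (∑ i, (x i)^2) * r : ℝ) : ℂ))) *
          (((a * w (R.mulVec (Pi.single i 1)) : ℝ) : ℂ)
            + ((Q (a • R.mulVec x - x₁) : ℝ) : ℂ) * (-Complex.I * ((r * (c * (2 * x i)) : ℝ) : ℂ))) := by
      have hws : w (a • R.mulVec (Pi.single i 1)) = a * w (R.mulVec (Pi.single i 1)) := by
        rw [_root_.map_smul, smul_eq_mul]
      rw [hws]; push_cast; ring
    rw [hz, norm_mul, norm_mul, norm_mul, hE1, hP1, Complex.norm_real,
      Real.norm_eq_abs, abs_of_nonneg (Real.rpow_nonneg ha _)]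
    have hz2 : ‖(((a * w (R.mulVec (Pi.single i 1)) : ℝ)) : ℂ)
            + ((Q (a • R.mulVec x - x₁) : ℝ) : ℂ) * (-Complex.I * ((r * (c * (2 * x i)) : ℝ) : ℂ))‖ ^ 2
        = (a * w (R.mulVec (Pi.single i 1)))^2 + (Q y * (r * (c * (2 * x i))))^2 := by
      rw [Complex.sq_norm, Complex.normSq_apply]
      simp [hy]
      ring
    rw [mul_pow, hz2]
    ring
  rw [Finset.sum_congr rfl fun i _ => key i, ← Finset.mul_sum]
  -- expand w over basis, orthogonality
  have hexp : ∀ v : Fin n → ℝ, w v = ∑ j, v j * w (Pi.single j 1) := by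
    intro v
    conv_lhs => rw [pi_eq_sum_univ v]
    rw [map_sum]
    refine Finset.sum_congr rfl fun j _ => ?_
    rw [_root_.map_smul, smul_eq_mul]
    have h1 : (fun j_1 => if j = j_1 then (1:ℝ) else 0) = Pi.single j 1 := by
      funext k; simp [Pi.single_apply, eq_comm]
    rw [h1]
  have hd : ∑ i, (w (R.mulVec (Pi.single i 1)))^2 = ∑ j, (w (Pi.single j 1))^2 := by
    have : ∀ i, w (R.mulVec (Pi.single i 1))
        = ((fun j => w (Pi.single j 1)) ᵥ* R) i := by
      intro i
      rw [hexp]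
      simp [Matrix.mulVec_single, Matrix.vecMul, dotProduct, mul_comm]
    rw [Finset.sum_congr rfl fun i _ => by rw [this i]]
    exact vecMul_sq_sum R hR _
  have hsum : ∑ i, ((a * w (R.mulVec (Pi.single i 1)))^2 + (Q y * (r * (c * (2 * x i))))^2)
      = a^2 * (∑ j, (w (Pi.single j 1))^2) + (2*c*r)^2 * (∑ i, (x i)^2) * Q y^2 := by
    rw [Finset.sum_add_distrib]
    congr 1
    · calc ∑ i, (a * w (R.mulVec (Pi.single i 1)))^2
          = a^2 * ∑ i, (w (R.mulVec (Pi.single i 1)))^2 := by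
            rw [Finset.mul_sum]; exact Finset.sum_congr rfl fun i _ => by ring
        _ = a^2 * ∑ j, (w (Pi.single j 1))^2 := by rw [hd]
    · calc ∑ i, (Q y * (r * (c * (2 * x i))))^2
          = ∑ i, ((2*c*r)^2 * Q y^2) * (x i)^2 := Finset.sum_congr rfl fun i _ => by ring
        _ = ((2*c*r)^2 * Q y^2) * ∑ i, (x i)^2 := by rw [← Finset.mul_sum]
        _ = (2*c*r)^2 * (∑ i, (x i)^2) * Q y^2 := by ring
  rw [hsum, hA2]
  ring
set_option maxHeartbeats 1000000 in
lemma integral_step {n : ℕ} (Q g : (Fin n → ℝ) → ℝ) (hQcont : Continuous Q)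
    (hgcont : Continuous g) (a c r : ℝ) (ha : 0 < a)
    (R : Matrix (Fin n) (Fin n) ℝ) (hR1 : Rᵀ * R = 1) (hR2 : R * Rᵀ = 1)
    (x₁ : Fin n → ℝ)
    (hIntW : Integrable (fun y => (∑ i, ((y + x₁) i)^2) * Q y^2) (volume : Measure (Fin n → ℝ)))
    (hIntG : Integrable g (volume : Measure (Fin n → ℝ))) :
    ∫ x : Fin n → ℝ, a ^ (n:ℝ) * ((2*c*r)^2 * (∑ i, (x i)^2) * Q (a • R.mulVec x - x₁)^2
        + a^2 * g (a • R.mulVec x - x₁))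
    = (2*c*r)^2 * (a⁻¹)^2 * (∫ y : Fin n → ℝ, (∑ i, ((y + x₁) i)^2) * Q y^2)
      + a^2 * ∫ y : Fin n → ℝ, g y := by
  set B : Matrix (Fin n) (Fin n) ℝ := a • R with hB
  set Binv : Matrix (Fin n) (Fin n) ℝ := a⁻¹ • Rᵀ with hBinv
  have hBinvB : Binv * B = 1 := by
    rw [hB, hBinv, Matrix.smul_mul, Matrix.mul_smul, hR1, smul_smul,
      inv_mul_cancel₀ ha.ne', one_smul]
  have hBBinv : B * Binv = 1 := by
    rw [hB, hBinv, Matrix.smul_mul, Matrix.mul_smul, hR2, smul_smul,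
      mul_inv_cancel₀ ha.ne', one_smul]
  have hdetR : R.det * R.det = 1 := by
    have := congrArg Matrix.det hR2
    rwa [Matrix.det_mul, Matrix.det_transpose, Matrix.det_one] at this
  have hdetB : |B.det| = a ^ n := by
    rw [hB, Matrix.det_smul, abs_mul, abs_pow, abs_of_pos ha, Fintype.card_fin]
    have : |R.det| = 1 := by
      rcases abs_choice R.det with h | h <;> nlinarith [abs_nonneg R.det]
    rw [this, mul_one]
  have hdetB_ne : B.det ≠ 0 := by
    intro h
    have : |B.det| = 0 := by rw [h, abs_zero]
    rw [hdetB] at this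
    exact (pow_pos ha n).ne' this
  -- measurable embedding
  haveI hInv : Invertible B := ⟨Binv, hBinvB, hBBinv⟩
  let e : (Fin n → ℝ) ≃ₗ[ℝ] (Fin n → ℝ) := Matrix.toLinearEquiv' B hInv
  have he : ⇑e = fun x => B.mulVec x := by
    funext x; simp [e, Matrix.toLinearEquiv', Matrix.toLin'_apply]
  have me : MeasurableEmbedding (fun x : Fin n → ℝ => B.mulVec x) := by
    rw [← he]
    exact (LinearEquiv.toContinuousLinearEquiv e).toHomeomorph.measurableEmbedding
  -- the function in new coordinates
  set f : (Fin n → ℝ) → ℝ := fun y => (2*c*r)^2 * (∑ i, ((Binv.mulVec y) i)^2) * Q (y - x₁)^2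
      + a^2 * g (y - x₁) with hf
  have hcomp : ∀ x, (2*c*r)^2 * (∑ i, (x i)^2) * Q (a • R.mulVec x - x₁)^2
      + a^2 * g (a • R.mulVec x - x₁) = f (B.mulVec x) := by
    intro x
    have h1 : Binv.mulVec (B.mulVec x) = x := by
      rw [Matrix.mulVec_mulVec, hBinvB, Matrix.one_mulVec]
    have h2 : B.mulVec x = a • R.mulVec x := by rw [hB, Matrix.smul_mulVec]
    simp only [hf]
    rw [← h2, h1]
  -- change of variables
  have hmap : Measure.map (fun x : Fin n → ℝ => B.mulVec x) volume
      = ENNReal.ofReal |B.det⁻¹| • volume := by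
    have h0 : ⇑(Matrix.toLin' B) = fun x : Fin n → ℝ => B.mulVec x := by
      funext v; exact Matrix.toLin'_apply B v
    rw [← h0]
    exact Real.map_matrix_volume_pi_eq_smul_volume_pi hdetB_ne
  have step1 : ∫ x : Fin n → ℝ, f (B.mulVec x) = (a ^ n : ℝ)⁻¹ * ∫ y, f y := by
    rw [← me.integral_map f, hmap, integral_smul_measure, ENNReal.toReal_ofReal (abs_nonneg _),
      abs_inv, hdetB, smul_eq_mul]
  -- translation
  have step2 : ∫ y : Fin n → ℝ, f y = ∫ y : Fin n → ℝ, f (y + x₁) := by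
    rw [integral_add_right_eq_self f x₁]
  -- simplify f (y + x₁)
  have hfy : ∀ y : Fin n → ℝ, f (y + x₁)
      = ((2*c*r)^2 * (a⁻¹)^2) * ((∑ i, ((y + x₁) i)^2) * Q y^2) + a^2 * g y := by
    intro y
    rw [hf]
    simp only [add_sub_cancel_right]
    have h3 : ∑ i, ((Binv.mulVec (y + x₁)) i)^2 = (a⁻¹)^2 * ∑ i, ((y + x₁) i)^2 := by
      have h4 : Binv.mulVec (y + x₁) = a⁻¹ • ((y + x₁) ᵥ* R) := by
        rw [hBinv, Matrix.smul_mulVec, Matrix.mulVec_transpose]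
      rw [h4]
      have h5 : ∀ i : Fin n, ((a⁻¹ • ((y + x₁) ᵥ* R)) i)^2
          = (a⁻¹)^2 * (((y + x₁) ᵥ* R) i)^2 := fun i => by
        simp [mul_pow]
      rw [Finset.sum_congr rfl fun i _ => h5 i, ← Finset.mul_sum, vecMul_sq_sum R hR2]
    rw [h3]
    ring
  -- split the integral
  have step3 : ∫ y : Fin n → ℝ, f (y + x₁)
      = ((2*c*r)^2 * (a⁻¹)^2) * (∫ y : Fin n → ℝ, (∑ i, ((y + x₁) i)^2) * Q y^2)
        + a^2 * ∫ y : Fin n → ℝ, g y := by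
    rw [integral_congr_ae (Filter.Eventually.of_forall hfy)]
    rw [integral_add (hIntW.const_mul _) (hIntG.const_mul _), integral_const_mul,
      integral_const_mul]
  calc ∫ x : Fin n → ℝ, a ^ (n:ℝ) * ((2*c*r)^2 * (∑ i, (x i)^2) * Q (a • R.mulVec x - x₁)^2
        + a^2 * g (a • R.mulVec x - x₁))
      = a ^ (n:ℝ) * ∫ x : Fin n → ℝ, f (B.mulVec x) := by
        rw [integral_const_mul]
        congr 1
        exact integral_congr_ae (Filter.Eventually.of_forall hcomp)
    _ = a ^ (n:ℝ) * ((a ^ n : ℝ)⁻¹ * ∫ y, f y) := by rw [step1]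
    _ = ∫ y : Fin n → ℝ, f y := by
        rw [Real.rpow_natCast, ← mul_assoc, mul_inv_cancel₀ (pow_pos ha n).ne', one_mul]
    _ = ((2*c*r)^2 * (a⁻¹)^2) * (∫ y : Fin n → ℝ, (∑ i, ((y + x₁) i)^2) * Q y^2)
        + a^2 * ∫ y : Fin n → ℝ, g y := by rw [step2, step3]

set_option maxHeartbeats 2000000 in
/-- The minimal-mass blowup profile
`u(t,x) = (2γcos(2γT)/sin(2γ(T−t)))^{n/2} e^{−i(γ/2)|x|²cot(2γ(T−t))}
e^{i·2γcos(2γT)cos(2γt)/sin(2γ(T−t))} Q(2γcos(2γT)e^{tM}x/sin(2γ(T−t)) − x₁)`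
blows up at rate `(T−t)^{−1}`; precisely,
`(T−t)·‖∇u(t)‖_{L²} → cos(2γT)·‖∇Q‖_{L²}` as `t → T⁻`. -/
theorem minimal_mass_profile_blowup_rate
    (n : ℕ) (hn : 1 ≤ n) (γ : ℝ) (hγ : 0 < γ)
    (M : Matrix (Fin n) (Fin n) ℝ) (hM : Mᵀ = -M)
    (x₁ : Fin n → ℝ)
    (T : ℝ) (hT : 0 < T) (hT' : T < Real.pi/(4*γ))
    (Q : (Fin n → ℝ) → ℝ) (hQ_smooth : ContDiff ℝ (⊤ : ℕ∞) Q)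
    (hQ_L2 : MemLp Q 2 (volume : Measure (Fin n → ℝ)))
    (hQ_grad_L2 : MemLp (fun x => fderiv ℝ Q x) 2 (volume : Measure (Fin n → ℝ)))
    (hQ_weight_L2 : MemLp (fun x => Real.sqrt (∑ i, (x i)^2) * Q x) 2
      (volume : Measure (Fin n → ℝ)))
    (hQ_grad_pos : 0 < Real.sqrt (∫ x : Fin n → ℝ, ∑ i, (fderiv ℝ Q x (Pi.single i 1))^2))
    (u : ℝ → (Fin n → ℝ) → ℂ)
    (hu : ∀ t x, u t x
      = (((2*γ*Real.cos (2*γ*T) / Real.sin (2*γ*(T - t))) ^ ((n : ℝ)/2) : ℝ) : ℂ)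
        * Complex.exp (-Complex.I * (((γ/2) * (∑ i, (x i)^2)
            * (Real.cos (2*γ*(T - t)) / Real.sin (2*γ*(T - t))) : ℝ) : ℂ))
        * Complex.exp (Complex.I * ((2*γ*Real.cos (2*γ*T)*Real.cos (2*γ*t)
            / Real.sin (2*γ*(T - t)) : ℝ) : ℂ))
        * ((Q ((2*γ*Real.cos (2*γ*T) / Real.sin (2*γ*(T - t)))
              • (NormedSpace.exp (t • M)).mulVec x - x₁) : ℝ) : ℂ)) :
    Tendsto
      (fun t => (T - t)
        * Real.sqrt (∫ x : Fin n → ℝ, ∑ i, ‖fderiv ℝ (u t) x (Pi.single i 1)‖^2))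
      (nhdsWithin T (Iio T))
      (nhds (Real.cos (2*γ*T)
        * Real.sqrt (∫ x : Fin n → ℝ, ∑ i, (fderiv ℝ Q x (Pi.single i 1))^2))) := by
  have hπ : 0 < Real.pi := Real.pi_pos
  have hT4 : T * (4*γ) < Real.pi := by
    rwa [lt_div_iff₀ (by positivity)] at hT'
  have hcosT : 0 < Real.cos (2*γ*T) := by
    apply Real.cos_pos_of_mem_Ioo
    constructor
    · nlinarith
    · nlinarith
  have hQcont := hQ_smooth.continuous
  set G := ∫ x : Fin n → ℝ, ∑ i, (fderiv ℝ Q x (Pi.single i 1))^2 with hG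
  set W := ∫ y : Fin n → ℝ, (∑ i, ((y + x₁) i)^2) * Q y^2 with hW
  -- continuity of the gradient-square sum
  have hgcont : Continuous fun y : Fin n → ℝ => ∑ j, (fderiv ℝ Q y (Pi.single j 1))^2 := by
    apply continuous_finset_sum
    intro j _
    exact ((hQ_smooth.fderiv_right (m := (⊤ : ℕ∞)) (by simp)).continuous.clm_apply continuous_const).pow 2
  -- integrability of the gradient-square sum
  have hIntG : Integrable (fun y : Fin n → ℝ => ∑ j, (fderiv ℝ Q y (Pi.single j 1))^2) volume := by
    have hbig : Integrable (fun y : Fin n → ℝ => ‖fderiv ℝ Q y‖ ^ 2) volume := by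
      have h := hQ_grad_L2.integrable_norm_rpow two_ne_zero ENNReal.ofNat_ne_top
      have h2 : ∀ y : Fin n → ℝ, ‖fderiv ℝ Q y‖ ^ (ENNReal.toReal 2) = ‖fderiv ℝ Q y‖ ^ (2:ℕ) := by
        intro y
        rw [ENNReal.toReal_ofNat, ← Real.rpow_natCast]
        norm_num
      exact h.congr (Eventually.of_forall h2)
    refine (hbig.const_mul (n:ℝ)).mono' hgcont.aestronglyMeasurable ?_
    filter_upwards with y
    rw [Real.norm_eq_abs, abs_of_nonneg (Finset.sum_nonneg fun j _ => sq_nonneg _)]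
    calc ∑ j, (fderiv ℝ Q y (Pi.single j 1))^2
        ≤ ∑ _j : Fin n, ‖fderiv ℝ Q y‖^2 := by
          refine Finset.sum_le_sum fun j _ => ?_
          have h := (fderiv ℝ Q y).le_opNorm (Pi.single j 1)
          rw [Pi.norm_single, norm_one, mul_one] at h
          calc (fderiv ℝ Q y (Pi.single j 1))^2
              = |fderiv ℝ Q y (Pi.single j 1)|^2 := (sq_abs _).symm
            _ ≤ ‖fderiv ℝ Q y‖^2 := by
                apply pow_le_pow_left₀ (abs_nonneg _)
                rwa [← Real.norm_eq_abs]
      _ = (n:ℝ) * ‖fderiv ℝ Q y‖^2 := by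
          rw [Finset.sum_const, Finset.card_univ, Fintype.card_fin, nsmul_eq_mul]
  -- integrability of the weighted-square
  have hIntW : Integrable (fun y : Fin n → ℝ => (∑ i, ((y + x₁) i)^2) * Q y^2) volume := by
    have hW1 : Integrable (fun y : Fin n → ℝ => (∑ i, (y i)^2) * Q y^2) volume := by
      have h := hQ_weight_L2.integrable_sq
      refine h.congr (Eventually.of_forall fun y => ?_)
      show (Real.sqrt (∑ i, (y i)^2) * Q y)^2 = (∑ i, (y i)^2) * Q y^2
      rw [mul_pow, Real.sq_sqrt (Finset.sum_nonneg fun i _ => sq_nonneg _)]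
    have hW2 : Integrable (fun y : Fin n → ℝ => Q y^2) volume := hQ_L2.integrable_sq
    have hcontW : Continuous fun y : Fin n → ℝ => (∑ i, ((y + x₁) i)^2) * Q y^2 := by
      apply Continuous.mul
      · apply continuous_finset_sum
        intro i _
        exact (((continuous_apply i).add continuous_const).comp continuous_id).pow 2
      · exact hQcont.pow 2
    refine ((hW1.const_mul 2).add (hW2.const_mul (2 * ∑ i, (x₁ i)^2))).mono'
      hcontW.aestronglyMeasurable ?_
    filter_upwards with y
    have hQ2 : (0:ℝ) ≤ Q y^2 := sq_nonneg _
    have hsum : ∑ i, ((y + x₁) i)^2 ≤ 2 * (∑ i, (y i)^2) + 2 * ∑ i, (x₁ i)^2 := by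
      rw [Finset.mul_sum, Finset.mul_sum, ← Finset.sum_add_distrib]
      refine Finset.sum_le_sum fun i _ => ?_
      have : (y + x₁) i = y i + x₁ i := rfl
      rw [this]
      nlinarith [sq_nonneg (y i - x₁ i)]
    have hnn : (0:ℝ) ≤ ∑ i, ((y + x₁) i)^2 := Finset.sum_nonneg fun i _ => sq_nonneg _
    rw [Real.norm_eq_abs, abs_of_nonneg (mul_nonneg hnn hQ2)]
    calc (∑ i, ((y + x₁) i)^2) * Q y^2
        ≤ (2 * (∑ i, (y i)^2) + 2 * ∑ i, (x₁ i)^2) * Q y^2 :=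
          mul_le_mul_of_nonneg_right hsum hQ2
      _ = 2 * ((∑ i, (y i)^2) * Q y^2) + (2 * ∑ i, (x₁ i)^2) * Q y^2 := by ring
  -- the eventual identity
  have hev : ∀ᶠ t in nhdsWithin T (Iio T),
      (T - t) * Real.sqrt (∫ x : Fin n → ℝ, ∑ i, ‖fderiv ℝ (u t) x (Pi.single i 1)‖^2)
      = Real.sqrt (((T - t) * Real.cos (2*γ*(T - t)) / (2 * Real.cos (2*γ*T)))^2 * W
          + ((2*γ*(T - t)) / Real.sin (2*γ*(T - t)))^2 * (Real.cos (2*γ*T))^2 * G) := by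
    have hmem : Ioo (T - Real.pi/(4*γ)) T ∈ nhdsWithin T (Iio T) := by
      apply Ioo_mem_nhdsLT_of_mem
      constructor
      · have : 0 < Real.pi/(4*γ) := by positivity
        linarith
      · exact le_refl T
    filter_upwards [hmem] with t ht
    obtain ⟨ht1, ht2⟩ := ht
    have hs0 : 0 < T - t := by linarith
    have hs4 : (T - t) * (4*γ) < Real.pi := by
      have h : T - t < Real.pi/(4*γ) := by linarith
      rwa [lt_div_iff₀ (by positivity)] at h
    have hsin : 0 < Real.sin (2*γ*(T - t)) := by
      apply Real.sin_pos_of_pos_of_lt_pi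
      · positivity
      · nlinarith
    have hfun := funext (hu t)
    set a := 2*γ*Real.cos (2*γ*T) / Real.sin (2*γ*(T - t)) with hadef
    have ha : 0 < a := div_pos (by positivity) hsin
    set R := NormedSpace.exp (t • M) with hRdef
    obtain ⟨hR1, hR2⟩ := exp_skew_ortho M hM t
    rw [← hRdef] at hR1 hR2
    have hptw : ∀ x : Fin n → ℝ, ∑ i, ‖fderiv ℝ (u t) x (Pi.single i 1)‖^2
        = a ^ (n : ℝ) * ((2*(γ/2)*(Real.cos (2*γ*(T - t)) / Real.sin (2*γ*(T - t))))^2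
            * (∑ i, (x i)^2) * Q (a • R.mulVec x - x₁)^2
          + a^2 * ∑ j, (fderiv ℝ Q (a • R.mulVec x - x₁) (Pi.single j 1))^2) := by
      intro x
      rw [hfun]
      exact ptwise Q hQ_smooth a (γ/2)
        (Real.cos (2*γ*(T - t)) / Real.sin (2*γ*(T - t)))
        (2*γ*Real.cos (2*γ*T)*Real.cos (2*γ*t) / Real.sin (2*γ*(T - t)))
        ha.le R hR2 x₁ x
    have hint : ∫ x : Fin n → ℝ, ∑ i, ‖fderiv ℝ (u t) x (Pi.single i 1)‖^2
        = (2*(γ/2)*(Real.cos (2*γ*(T - t)) / Real.sin (2*γ*(T - t))))^2 * (a⁻¹)^2 * W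
          + a^2 * G := by
      rw [hW, hG]
      exact (integral_congr_ae (Eventually.of_forall hptw)).trans
        (integral_step Q (fun y => ∑ j, (fderiv ℝ Q y (Pi.single j 1))^2) hQcont hgcont a (γ/2)
          (Real.cos (2*γ*(T - t)) / Real.sin (2*γ*(T - t))) ha R hR1 hR2 x₁ hIntW hIntG)
    rw [hint]
    have key : ∀ X : ℝ, (T - t) * Real.sqrt X = Real.sqrt ((T - t)^2 * X) := by
      intro X
      rw [Real.sqrt_mul (sq_nonneg _), Real.sqrt_sq hs0.le]
    rw [key]
    congr 1
    rw [hadef]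
    field_simp
    have hs' : Real.sin (T * γ * 2 - t * γ * 2) ≠ 0 := by
      rw [show T * γ * 2 - t * γ * 2 = 2*γ*(T - t) by ring]; exact hsin.ne'
    have hss : Real.sin (2*γ*(T - t)) ^ 2 * (Real.sin (2*γ*(T - t)))⁻¹ ^ 2 = 1 := by
      rw [← mul_pow, mul_inv_cancel₀ hsin.ne', one_pow]
    linear_combination (norm := ring_nf) (Real.cos (2*γ*(T - t)) ^ 2 * W * (Real.cos (2*γ*T))⁻¹ ^ 2) * hss
  -- the limit of the model function
  have hcsub : Continuous (fun t : ℝ => T - t) := by continuity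
  have hl : Tendsto (fun t : ℝ => T - t) (nhdsWithin T (Iio T)) (nhds 0) :=
    (hcsub.tendsto' T 0 (by ring)).mono_left nhdsWithin_le_nhds
  have hcos1 : Tendsto (fun t : ℝ => Real.cos (2*γ*(T - t))) (nhdsWithin T (Iio T)) (nhds 1) := by
    have hc : Continuous (fun t : ℝ => Real.cos (2*γ*(T - t))) := by continuity
    exact (hc.tendsto' T 1 (by simp)).mono_left nhdsWithin_le_nhds
  have hv : Tendsto (fun t : ℝ => 2*γ*(T - t)) (nhdsWithin T (Iio T))
      (nhdsWithin 0 {(0:ℝ)}ᶜ) := by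
    rw [tendsto_nhdsWithin_iff]
    constructor
    · have hc : Continuous (fun t : ℝ => 2*γ*(T - t)) := by continuity
      exact (hc.tendsto' T 0 (by ring)).mono_left nhdsWithin_le_nhds
    · filter_upwards [self_mem_nhdsWithin] with t (ht : t < T)
      simp only [mem_compl_iff, mem_singleton_iff]
      have : 0 < 2*γ*(T - t) := by nlinarith
      exact this.ne'
  have hsin1 : Tendsto (fun t : ℝ => 2*γ*(T - t) / Real.sin (2*γ*(T - t)))
      (nhdsWithin T (Iio T)) (nhds 1) := by
    have h1 := sin_slope_lim.comp hv
    have h2 := h1.inv₀ one_ne_zero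
    rw [inv_one] at h2
    refine h2.congr fun t => ?_
    simp only [Function.comp]
    rw [inv_div]
  have hterm1 : Tendsto (fun t : ℝ =>
      ((T - t) * Real.cos (2*γ*(T - t)) / (2 * Real.cos (2*γ*T)))^2 * W)
      (nhdsWithin T (Iio T)) (nhds ((0 * 1 / (2 * Real.cos (2*γ*T)))^2 * W)) :=
    (((hl.mul hcos1).div_const (2 * Real.cos (2*γ*T))).pow 2).mul_const W
  have hterm2 : Tendsto (fun t : ℝ =>
      ((2*γ*(T - t)) / Real.sin (2*γ*(T - t)))^2 * (Real.cos (2*γ*T))^2 * G)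
      (nhdsWithin T (Iio T)) (nhds ((1:ℝ)^2 * (Real.cos (2*γ*T))^2 * G)) :=
    ((hsin1.pow 2).mul_const _).mul_const G
  have hsum := hterm1.add hterm2
  have hlim := (Real.continuous_sqrt.tendsto _).comp hsum
  have hval : Real.sqrt ((0 * 1 / (2 * Real.cos (2*γ*T)))^2 * W
      + (1:ℝ)^2 * (Real.cos (2*γ*T))^2 * G) = Real.cos (2*γ*T) * Real.sqrt G := by
    rw [show (0 * 1 / (2 * Real.cos (2*γ*T)))^2 * W + (1:ℝ)^2 * (Real.cos (2*γ*T))^2 * G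
      = (Real.cos (2*γ*T))^2 * G from by ring]
    rw [Real.sqrt_mul (sq_nonneg _), Real.sqrt_sq hcosT.le]
  rw [hval] at hlim
  exact hlim.congr' (by filter_upwards [hev] with t h using h.symm)
end
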